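/- arXiv:2202.03940 — 5 statements merged into one kernel-verified Lean document; each statement's English description precedes it below -/
import Mathlib

section
/- Let D be a d-(n,k,λ) design over F_q (n ≥ 2k) and let F be a family of k-subspaces of F_q^n whose characteristic function has degree d. Then |F ∩ D| = |F| · |D| / [n choose k]_q. -/
open Module
open scoped Classical

noncomputable instance {F : Type} [Field F] [Fintype F] {n : ℕ} :
    Fintype (Submodule F (Fin n → F)) := Fintype.ofFinite _

/-- The Gaussian binomial coefficient `[n choose k]_q`: the number of `k`-dimensional
subspaces of `F^n`, where `q` is the size of the finite field `F`. -/
noncomputable def gaussBinom (F : Type) [Field F] [Fintype F] (n k : ℕ) : ℕ :=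
  Nat.card {T : Submodule F (Fin n → F) // finrank F T = k}

/-- A family of `k`-subspaces has degree `d` if its 0-1 indicator function is a real linear
combination of the indicators `x_T` over `d`-subspaces `T`. -/
def HasDegree (F : Type) [Field F] [Fintype F] (n d k : ℕ)
    (Fam : Finset (Submodule F (Fin n → F))) : Prop :=
  ∃ c : Submodule F (Fin n → F) → ℝ, ∀ S : Submodule F (Fin n → F), finrank F S = k →
    (if S ∈ Fam then (1 : ℝ) else 0) = ∑ T : Submodule F (Fin n → F),
      c T * (if finrank F T = d ∧ T ≤ S then (1 : ℝ) else 0)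

/- ------------------ auxiliary lemmas ------------------ -/

lemma aux_le_comap_mkQ {K V : Type*} [Field K] [AddCommGroup V] [Module K V]
    (T : Submodule K V) (q : Submodule K (V ⧸ T)) : T ≤ q.comap T.mkQ := by
  intro x hx
  simp only [Submodule.mem_comap, Submodule.mkQ_apply]
  rw [(Submodule.Quotient.mk_eq_zero T).2 hx]
  exact q.zero_mem

lemma aux_finrank_comap_mkQ {K V : Type*} [Field K] [AddCommGroup V] [Module K V]
    [FiniteDimensional K V] (T : Submodule K V) (q : Submodule K (V ⧸ T)) :
    finrank K (q.comap T.mkQ) = finrank K q + finrank K T := by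
  have h := LinearMap.finrank_range_add_finrank_ker (T.mkQ.domRestrict (q.comap T.mkQ))
  rw [LinearMap.range_domRestrict, LinearMap.ker_domRestrict,
    Submodule.map_comap_eq_of_surjective T.mkQ_surjective, Submodule.ker_mkQ] at h
  have h2 : finrank K (T.comap (q.comap T.mkQ).subtype) = finrank K T :=
    LinearEquiv.finrank_eq (Submodule.comapSubtypeEquivOfLe (aux_le_comap_mkQ T q))
  omega

/-- counting subspaces below a given subspace -/
lemma aux_count_le {K V : Type*} [Field K] [AddCommGroup V] [Module K V]
    (S : Submodule K V) (j : ℕ) :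
    Nat.card {T : Submodule K V // finrank K T = j ∧ T ≤ S} =
      Nat.card {T : Submodule K S // finrank K T = j} := by
  apply Nat.card_congr
  refine ⟨fun T => ⟨T.1.comap S.subtype, ?_⟩, fun T => ⟨T.1.map S.subtype, ?_, ?_⟩, ?_, ?_⟩
  · rw [LinearEquiv.finrank_eq (Submodule.comapSubtypeEquivOfLe T.2.2)]
    exact T.2.1
  · rw [Submodule.finrank_map_subtype_eq]
    exact T.2
  · exact Submodule.map_subtype_le S T.1
  · rintro ⟨T, hT1, hT2⟩
    apply Subtype.ext
    simp only [Submodule.map_comap_subtype]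
    exact inf_eq_right.2 hT2
  · rintro ⟨T, hT⟩
    apply Subtype.ext
    simp [Submodule.comap_map_eq, Submodule.ker_subtype]

/-- counting subspaces above a given subspace -/
lemma aux_count_ge {K V : Type*} [Field K] [AddCommGroup V] [Module K V]
    [FiniteDimensional K V] (T : Submodule K V) {d k : ℕ}
    (hT : finrank K T = d) (hdk : d ≤ k) :
    Nat.card {S : Submodule K V // finrank K S = k ∧ T ≤ S} =
      Nat.card {q : Submodule K (V ⧸ T) // finrank K q = k - d} := by
  apply Nat.card_congr
  have hcm : ∀ S : Submodule K V, T ≤ S → (S.map T.mkQ).comap T.mkQ = S := by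
    intro S hS
    rw [Submodule.comap_map_eq, Submodule.ker_mkQ]
    exact sup_eq_left.2 hS
  refine ⟨fun S => ⟨S.1.map T.mkQ, ?_⟩, fun q => ⟨q.1.comap T.mkQ, ?_, aux_le_comap_mkQ T q.1⟩,
    ?_, ?_⟩
  · have h := aux_finrank_comap_mkQ T (S.1.map T.mkQ)
    rw [hcm S.1 S.2.2, S.2.1, hT] at h
    omega
  · rw [aux_finrank_comap_mkQ T q.1, q.2, hT]
    omega
  · rintro ⟨S, hS1, hS2⟩
    exact Subtype.ext (hcm S hS2)
  · rintro ⟨q, hq⟩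
    exact Subtype.ext (Submodule.map_comap_eq_of_surjective T.mkQ_surjective q)

/-- counting subspaces of given dimension in any finite-dimensional space -/
lemma aux_card_finrank (F : Type) [Field F] [Fintype F] {M : Type*} [AddCommGroup M]
    [Module F M] [FiniteDimensional F M] (j : ℕ) :
    Nat.card {p : Submodule F M // finrank F p = j} = gaussBinom F (finrank F M) j := by
  unfold gaussBinom
  apply Nat.card_congr
  have e : M ≃ₗ[F] (Fin (finrank F M) → F) :=
    LinearEquiv.ofFinrankEq _ _ (by rw [Module.finrank_fin_fun])
  refine (Submodule.orderIsoMapComap e).toEquiv.subtypeEquiv fun p => ?_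
  have h1 : finrank F ((Submodule.orderIsoMapComap e) p) = finrank F p :=
    LinearEquiv.finrank_map_eq e p
  rw [show ((Submodule.orderIsoMapComap e).toEquiv p : Submodule F (Fin (finrank F M) → F))
    = (Submodule.orderIsoMapComap e) p from rfl, h1]

/-- If `D` is a `d`-`(n,k,λ)` design over `F_q` (`n ≥ 2k`) and `Fam` is a family of
`k`-subspaces of `F_q^n` whose characteristic function has degree `d`, then
`|Fam ∩ D| = |Fam| · |D| / [n choose k]_q`. -/
theorem stmt_6 (F : Type) [Field F] [Fintype F] (n k d lam : ℕ)
    (hdk : d ≤ k) (hkn : 2 * k ≤ n)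
    (D : Finset (Submodule F (Fin n → F)))
    (hDk : ∀ S ∈ D, finrank F S = k)
    (hdesign : ∀ T : Submodule F (Fin n → F), finrank F T = d →
      (D.filter (fun S => T ≤ S)).card = lam)
    (Fam : Finset (Submodule F (Fin n → F)))
    (hFk : ∀ S ∈ Fam, finrank F S = k)
    (hdeg : HasDegree F n d k Fam) :
    (Fam ∩ D).card * gaussBinom F n k = Fam.card * D.card := by
  have hdn : d ≤ n := by omega
  have hrk : finrank F (Fin n → F) = n := Module.finrank_fin_fun F
  set V := Fin n → F
  set Td : Finset (Submodule F V) := Finset.univ.filter (fun T => finrank F T = d) with hTd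
  set Sk : Finset (Submodule F V) := Finset.univ.filter (fun S => finrank F S = k) with hSk
  set G : ℕ := gaussBinom F n k with hG
  set Gd : ℕ := gaussBinom F n d with hGd
  set m : ℕ := gaussBinom F k d with hm
  set N : ℕ := gaussBinom F (n - d) (k - d) with hN
  -- Finset card = Nat.card for filtered subtypes
  have cardconv : ∀ (P : Submodule F V → Prop) (inst : DecidablePred P),
      (@Finset.filter _ P inst Finset.univ).card = Nat.card {x : Submodule F V // P x} := by
    intro P inst
    letI := inst
    rw [Nat.card_eq_fintype_card, Fintype.card_subtype]
  -- per-S count of d-subspaces below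
  have hmS : ∀ S : Submodule F V, finrank F S = k →
      (Td.filter (fun T => T ≤ S)).card = m := by
    intro S hS
    rw [hTd, Finset.filter_filter, cardconv, aux_count_le S d]
    rw [hm, ← hS]
    exact aux_card_finrank F d
  -- per-T count of k-subspaces above
  have hNT : ∀ T : Submodule F V, finrank F T = d →
      (Sk.filter (fun S => T ≤ S)).card = N := by
    intro T hT
    rw [hSk, Finset.filter_filter, cardconv, aux_count_ge T hT hdk]
    rw [hN]
    have hq : finrank F (V ⧸ T) = n - d := by
      have := Submodule.finrank_quotient_add_finrank T
      rw [hrk, hT] at this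
      omega
    rw [← hq]
    exact aux_card_finrank F (k - d)
  have hTdcard : Td.card = Gd := by rw [hTd, cardconv]; rfl
  have hSkcard : Sk.card = G := by rw [hSk, cardconv]; rfl
  -- double counting
  have dc : ∀ (A B : Finset (Submodule F V)),
      ∑ T ∈ A, (B.filter (fun S => T ≤ S)).card = ∑ S ∈ B, (A.filter (fun T => T ≤ S)).card := by
    intro A B
    simp_rw [Finset.card_filter]
    exact Finset.sum_comm
  have h1 : Gd * lam = D.card * m := by
    have := dc Td D
    rw [Finset.sum_congr rfl (fun T hT => hdesign T (Finset.mem_filter.1 hT).2),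
      Finset.sum_const, smul_eq_mul, hTdcard] at this
    rw [this, Finset.sum_congr rfl (fun S hS => hmS S (hDk S hS)), Finset.sum_const,
      smul_eq_mul]
  have h2 : Gd * N = G * m := by
    have := dc Td Sk
    rw [Finset.sum_congr rfl (fun T hT => hNT T (Finset.mem_filter.1 hT).2),
      Finset.sum_const, smul_eq_mul, hTdcard] at this
    rw [this, Finset.sum_congr rfl (fun S hS => hmS S (Finset.mem_filter.1 hS).2),
      Finset.sum_const, smul_eq_mul, hSkcard]
  -- Gd is positive
  have hGdpos : 0 < Gd := by
    rw [hGd]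
    unfold gaussBinom
    have : ∃ W : Submodule F V, finrank F W = d := by
      rcases Nat.eq_zero_or_pos d with h0 | hpos
      · exact ⟨⊥, by simp [h0]⟩
      · set g : Fin n → Fin d := fun i => ⟨min i.1 (d - 1), by omega⟩ with hgdef
        have hg : Function.Surjective g := by
          intro j
          refine ⟨⟨j.1, by omega⟩, ?_⟩
          have := j.2
          ext
          simp [hgdef]
          omega
        refine ⟨LinearMap.range (LinearMap.funLeft F F g), ?_⟩
        rw [LinearMap.finrank_range_of_inj (LinearMap.funLeft_injective_of_surjective F F g hg)]
        rw [Module.finrank_fin_fun]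
    obtain ⟨W, hW⟩ := this
    have : Nonempty {T : Submodule F (Fin n → F) // finrank F T = d} := ⟨⟨W, hW⟩⟩
    exact Nat.card_pos
  -- key identity
  have key : lam * G = N * D.card := by
    apply Nat.eq_of_mul_eq_mul_left hGdpos
    calc Gd * (lam * G) = (Gd * lam) * G := by ring
    _ = D.card * m * G := by rw [h1]
    _ = (Gd * N) * D.card := by rw [h2]; ring
    _ = Gd * (N * D.card) := by ring
  -- the analytic part
  obtain ⟨c, hc⟩ := hdeg
  have inner : ∀ (B : Finset (Submodule F V)) (T : Submodule F V),
      ∑ S ∈ B, (if finrank F T = d ∧ T ≤ S then (1 : ℝ) else 0)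
        = if finrank F T = d then ((B.filter (fun S => T ≤ S)).card : ℝ) else 0 := by
    intro B T
    by_cases hT : finrank F T = d
    · simp only [hT, true_and, if_true, Finset.card_filter]
      push_cast
      rfl
    · simp [hT]
  have expand : ∀ (B : Finset (Submodule F V)), (∀ S ∈ B, finrank F S = k) →
      ∑ S ∈ B, (if S ∈ Fam then (1 : ℝ) else 0)
        = ∑ T : Submodule F V, c T *
            (if finrank F T = d then ((B.filter (fun S => T ≤ S)).card : ℝ) else 0) := by
    intro B hB
    rw [Finset.sum_congr rfl (fun S hS => hc S (hB S hS)), Finset.sum_comm]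
    refine Finset.sum_congr rfl fun T _ => ?_
    rw [← Finset.mul_sum, inner B T]
  set A : ℝ := ∑ T : Submodule F V, c T * (if finrank F T = d then (1 : ℝ) else 0) with hA
  have hcap : ((Fam ∩ D).card : ℝ) = lam * A := by
    have h3 : ((Fam ∩ D).card : ℝ) = ∑ S ∈ D, (if S ∈ Fam then (1 : ℝ) else 0) := by
      rw [Finset.inter_comm, ← Finset.filter_mem_eq_inter, Finset.card_filter]
      push_cast
      rfl
    rw [h3, expand D hDk, hA, Finset.mul_sum]
    refine Finset.sum_congr rfl fun T _ => ?_
    by_cases hT : finrank F T = d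
    · rw [if_pos hT, if_pos hT, hdesign T hT]; ring
    · simp [hT]
  have hfam : ((Fam).card : ℝ) = N * A := by
    have hsub : Fam ⊆ Sk := fun S hS => Finset.mem_filter.2 ⟨Finset.mem_univ _, hFk S hS⟩
    have h3 : ((Fam).card : ℝ) = ∑ S ∈ Sk, (if S ∈ Fam then (1 : ℝ) else 0) := by
      conv_lhs => rw [show Fam = Sk.filter (fun S => S ∈ Fam) by
        rw [Finset.filter_mem_eq_inter, Finset.inter_eq_right.2 hsub]]
      rw [Finset.card_filter]
      push_cast
      rfl
    rw [h3, expand Sk (fun S hS => (Finset.mem_filter.1 hS).2), hA, Finset.mul_sum]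
    refine Finset.sum_congr rfl fun T _ => ?_
    by_cases hT : finrank F T = d
    · rw [if_pos hT, if_pos hT, hNT T hT]; ring
    · simp [hT]
  have keyR : (lam : ℝ) * G = N * D.card := by exact_mod_cast key
  have goalR : ((Fam ∩ D).card : ℝ) * G = (Fam.card : ℝ) * D.card := by
    rw [hcap, hfam]
    linear_combination A * keyR
  exact_mod_cast goalR
end

section
/- Let F be a family of k-subspaces of F_q^n of degree d, and suppose a d-(n,k,λ) design over F_q exists. Then |F| · λ · [n choose d]_q / [k choose d]_q is divisible by [n choose k]_q, i.e., |F|·|D|/[n choose k]_q is an integer for any d-(n,k,λ) design D. -/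
open Module
open scoped Classical

section Aux

variable {F : Type} [Field F]

lemma card_subspaces_congr {M M' : Type} [AddCommGroup M] [Module F M]
    [AddCommGroup M'] [Module F M'] (e : M ≃ₗ[F] M') (j : ℕ) :
    Nat.card {S : Submodule F M // finrank F S = j}
      = Nat.card {S : Submodule F M' // finrank F S = j} := by
  refine Nat.card_congr ((Submodule.orderIsoMapComap e).toEquiv.subtypeEquiv fun S => ?_)
  have h : finrank F ((Submodule.orderIsoMapComap e).toEquiv S) = finrank F S :=
    LinearEquiv.finrank_map_eq e S
  rw [h]

lemma card_below {n : ℕ} (S : Submodule F (Fin n → F)) [Fintype F] {k d : ℕ}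
    (hS : finrank F S = k) :
    Nat.card {T : Submodule F (Fin n → F) // finrank F T = d ∧ T ≤ S}
      = Nat.card {T : Submodule F (Fin k → F) // finrank F T = d} := by
  have e1 : {T : Submodule F (Fin n → F) // finrank F T = d ∧ T ≤ S}
      ≃ {T : Submodule F (Fin n → F) // T ≤ S ∧ finrank F T = d} :=
    Equiv.subtypeEquivRight fun T => and_comm
  have e2 : {T' : Submodule F S // finrank F T' = d}
      ≃ {T : Submodule F (Fin n → F) // T ≤ S ∧ finrank F T = d} := by
    refine ((Submodule.MapSubtype.orderIso S).toEquiv.subtypeEquiv fun T' => ?_).trans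
      (Equiv.subtypeSubtypeEquivSubtypeInter _ _)
    have h : finrank F (((Submodule.MapSubtype.orderIso S).toEquiv T' : _)) = finrank F T' :=
      Submodule.finrank_map_subtype_eq S T'
    rw [h]
  obtain ⟨e⟩ : Nonempty (S ≃ₗ[F] (Fin k → F)) := by
    rw [FiniteDimensional.nonempty_linearEquiv_iff_finrank_eq, hS, Module.finrank_fin_fun]
  rw [Nat.card_congr (e1.trans (e2.symm)), card_subspaces_congr e]

lemma finrank_comap_mkQ {M : Type} [AddCommGroup M] [Module F M] [FiniteDimensional F M]
    (T : Submodule F M) (S' : Submodule F (M ⧸ T)) :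
    finrank F (S'.comap T.mkQ) = finrank F S' + finrank F T := by
  set W := S'.comap T.mkQ with hW
  have hTW : T ≤ W := fun x hx => by
    simp only [hW, Submodule.mem_comap, Submodule.mkQ_apply]
    rw [Submodule.Quotient.mk_eq_zero T |>.mpr hx]
    exact S'.zero_mem
  set f : W →ₗ[F] M ⧸ T := T.mkQ.comp W.subtype with hf
  have hker : LinearMap.ker f = T.comap W.subtype := by
    rw [hf, LinearMap.ker_comp, Submodule.ker_mkQ]
  have hrange : LinearMap.range f = S' := by
    rw [hf, LinearMap.range_comp, Submodule.range_subtype]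
    exact Submodule.map_comap_eq_self (by rw [Submodule.range_mkQ]; exact le_top)
  have h := LinearMap.finrank_range_add_finrank_ker f
  rw [hrange, hker] at h
  rw [← h, (Submodule.comapSubtypeEquivOfLe hTW).finrank_eq]

lemma card_above {n : ℕ} [Fintype F] {k d : ℕ} (hdk : d ≤ k)
    (T : Submodule F (Fin n → F)) (hT : finrank F T = d) :
    Nat.card {S : Submodule F (Fin n → F) // T ≤ S ∧ finrank F S = k}
      = Nat.card {S : Submodule F (Fin (n - d) → F) // finrank F S = k - d} := by
  have e2 : {S' : Submodule F ((Fin n → F) ⧸ T) // finrank F S' = k - d}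
      ≃ {S : Submodule F (Fin n → F) // T ≤ S ∧ finrank F S = k} := by
    refine ((Submodule.comapMkQRelIso T).toEquiv.subtypeEquiv fun S' => ?_).trans
      (Equiv.subtypeSubtypeEquivSubtypeInter _ _)
    have h : finrank F (((Submodule.comapMkQRelIso T).toEquiv S' : _))
        = finrank F S' + finrank F T := finrank_comap_mkQ T S'
    rw [h, hT]
    omega
  obtain ⟨e⟩ : Nonempty (((Fin n → F) ⧸ T) ≃ₗ[F] (Fin (n - d) → F)) := by
    rw [FiniteDimensional.nonempty_linearEquiv_iff_finrank_eq, Module.finrank_fin_fun]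
    have h := T.finrank_quotient_add_finrank
    rw [hT, Module.finrank_fin_fun] at h
    omega
  rw [← Nat.card_congr e2, card_subspaces_congr e]

variable [Fintype F]

lemma gaussBinom_eq_card_filter (n j : ℕ) :
    gaussBinom F n j
      = (Finset.univ.filter fun S : Submodule F (Fin n → F) => finrank F S = j).card := by
  rw [gaussBinom, Nat.card_eq_fintype_card, Fintype.card_subtype]

lemma gaussBinom_pos {k d : ℕ} (hdk : d ≤ k) : 0 < gaussBinom F k d := by
  have hinj : Function.Injective (Function.ExtendByZero.linearMap F (Fin.castLE hdk)) := by
    intro x y h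
    funext i
    have := congrFun h (Fin.castLE hdk i)
    simpa [(Fin.castLE_injective hdk).extend_apply] using this
  have : Nonempty {T : Submodule F (Fin k → F) // finrank F T = d} :=
    ⟨LinearMap.range (Function.ExtendByZero.linearMap F (Fin.castLE hdk)), by
      rw [LinearMap.finrank_range_of_inj hinj, Module.finrank_fin_fun]⟩
  exact Nat.card_pos

lemma count_below {n k d : ℕ} (S : Submodule F (Fin n → F)) (hS : finrank F S = k) :
    (Finset.univ.filter fun T : Submodule F (Fin n → F) =>
      finrank F T = d ∧ T ≤ S).card = gaussBinom F k d := by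
  rw [gaussBinom, ← Fintype.card_subtype, ← Nat.card_eq_fintype_card, card_below S hS]

lemma count_above {n k d : ℕ} (hdk : d ≤ k) (T : Submodule F (Fin n → F))
    (hT : finrank F T = d) :
    (Finset.univ.filter fun S : Submodule F (Fin n → F) =>
      T ≤ S ∧ finrank F S = k).card = gaussBinom F (n - d) (k - d) := by
  rw [gaussBinom, ← Fintype.card_subtype, ← Nat.card_eq_fintype_card, card_above hdk T hT]

lemma identity1 {n k d : ℕ} (hdk : d ≤ k) :
    gaussBinom F n k * gaussBinom F k d
      = gaussBinom F n d * gaussBinom F (n - d) (k - d) := by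
  have key : ∑ S : Submodule F (Fin n → F), (Finset.univ.filter fun T : Submodule F (Fin n → F) =>
        finrank F T = d ∧ T ≤ S ∧ finrank F S = k).card
      = ∑ T : Submodule F (Fin n → F), (Finset.univ.filter fun S : Submodule F (Fin n → F) =>
        finrank F T = d ∧ T ≤ S ∧ finrank F S = k).card := by
    simp only [Finset.card_filter]
    rw [Finset.sum_comm]
  have lhs : ∑ S : Submodule F (Fin n → F), (Finset.univ.filter fun T : Submodule F (Fin n → F) =>
        finrank F T = d ∧ T ≤ S ∧ finrank F S = k).card
      = gaussBinom F n k * gaussBinom F k d := by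
    have h : ∀ S : Submodule F (Fin n → F), (Finset.univ.filter fun T : Submodule F (Fin n → F) =>
        finrank F T = d ∧ T ≤ S ∧ finrank F S = k).card
        = if finrank F S = k then gaussBinom F k d else 0 := by
      intro S
      by_cases hS : finrank F S = k
      · rw [if_pos hS, ← count_below S hS]
        congr 1
        apply Finset.filter_congr
        intro T _
        simp [hS]
      · rw [if_neg hS]
        simp [hS]
    simp only [h]
    rw [← Finset.sum_filter, Finset.sum_const, smul_eq_mul, ← gaussBinom_eq_card_filter]
  have rhs : ∑ T : Submodule F (Fin n → F), (Finset.univ.filter fun S : Submodule F (Fin n → F) =>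
        finrank F T = d ∧ T ≤ S ∧ finrank F S = k).card
      = gaussBinom F n d * gaussBinom F (n - d) (k - d) := by
    have h : ∀ T : Submodule F (Fin n → F), (Finset.univ.filter fun S : Submodule F (Fin n → F) =>
        finrank F T = d ∧ T ≤ S ∧ finrank F S = k).card
        = if finrank F T = d then gaussBinom F (n - d) (k - d) else 0 := by
      intro T
      by_cases hT : finrank F T = d
      · rw [if_pos hT, ← count_above hdk T hT]
        congr 1
        apply Finset.filter_congr
        intro S _
        simp [hT]
      · rw [if_neg hT]
        simp [hT]
    simp only [h]
    rw [← Finset.sum_filter, Finset.sum_const, smul_eq_mul, ← gaussBinom_eq_card_filter]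
  rw [← lhs, key, rhs]

lemma identity2 {n k d lam : ℕ} (D : Finset (Submodule F (Fin n → F)))
    (hDk : ∀ S ∈ D, finrank F S = k)
    (hdesign : ∀ T : Submodule F (Fin n → F), finrank F T = d →
      (D.filter (fun S => T ≤ S)).card = lam) :
    D.card * gaussBinom F k d = gaussBinom F n d * lam := by
  have key : ∑ S ∈ D, (Finset.univ.filter fun T : Submodule F (Fin n → F) =>
        finrank F T = d ∧ T ≤ S).card
      = ∑ T : Submodule F (Fin n → F), ∑ S ∈ D,
        (if finrank F T = d ∧ T ≤ S then 1 else 0) := by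
    simp only [Finset.card_filter]
    rw [Finset.sum_comm]
  have lhs : ∑ S ∈ D, (Finset.univ.filter fun T : Submodule F (Fin n → F) =>
        finrank F T = d ∧ T ≤ S).card = D.card * gaussBinom F k d := by
    rw [Finset.sum_congr rfl fun S hS => count_below S (hDk S hS), Finset.sum_const,
      smul_eq_mul]
  have rhs : ∑ T : Submodule F (Fin n → F), ∑ S ∈ D,
        (if finrank F T = d ∧ T ≤ S then 1 else 0)
      = gaussBinom F n d * lam := by
    have h : ∀ T : Submodule F (Fin n → F), ∑ S ∈ D,
        (if finrank F T = d ∧ T ≤ S then 1 else 0)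
        = if finrank F T = d then lam else 0 := by
      intro T
      by_cases hT : finrank F T = d
      · rw [if_pos hT, ← hdesign T hT, Finset.card_filter]
        exact Finset.sum_congr rfl fun S _ => by simp [hT]
      · simp [hT]
    simp only [h]
    rw [← Finset.sum_filter, Finset.sum_const, smul_eq_mul, ← gaussBinom_eq_card_filter]
  rw [← lhs, key, rhs]

end Aux

/-- If `Fam` is a degree `d` family of `k`-subspaces of `F_q^n` (`n ≥ 2k ≥ 2d`) and a
`d`-`(n,k,λ)` design `D` over `F_q` exists, then `[n choose k]_q` divides `|Fam| · |D|`. -/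
theorem stmt_7 (F : Type) [Field F] [Fintype F] (n k d lam : ℕ)
    (hdk : d ≤ k) (hkn : 2 * k ≤ n)
    (D : Finset (Submodule F (Fin n → F)))
    (hDk : ∀ S ∈ D, finrank F S = k)
    (hdesign : ∀ T : Submodule F (Fin n → F), finrank F T = d →
      (D.filter (fun S => T ≤ S)).card = lam)
    (Fam : Finset (Submodule F (Fin n → F)))
    (hFk : ∀ S ∈ Fam, finrank F S = k)
    (hdeg : HasDegree F n d k Fam) :
    gaussBinom F n k ∣ Fam.card * D.card := by
  classical
  obtain ⟨c, hc⟩ := hdeg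
  set A : Finset (Submodule F (Fin n → F)) :=
    Finset.univ.filter (fun S => finrank F S = k) with hA
  set C : ℝ :=
    ∑ T ∈ Finset.univ.filter (fun T : Submodule F (Fin n → F) => finrank F T = d), c T with hC
  have h3 : gaussBinom F (n - d) (k - d) * D.card = gaussBinom F n k * lam := by
    have h1 := identity1 (F := F) (n := n) hdk
    have h2 := identity2 D hDk hdesign
    have gpos : 0 < gaussBinom F k d := gaussBinom_pos hdk
    refine Nat.eq_of_mul_eq_mul_left gpos ?_
    calc gaussBinom F k d * (gaussBinom F (n - d) (k - d) * D.card)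
        = gaussBinom F (n - d) (k - d) * (D.card * gaussBinom F k d) := by ring
      _ = gaussBinom F (n - d) (k - d) * (gaussBinom F n d * lam) := by rw [h2]
      _ = gaussBinom F n d * gaussBinom F (n - d) (k - d) * lam := by ring
      _ = gaussBinom F n k * gaussBinom F k d * lam := by rw [← h1]
      _ = gaussBinom F k d * (gaussBinom F n k * lam) := by ring
  have hsum : ∀ E : Finset (Submodule F (Fin n → F)), (∀ S ∈ E, finrank F S = k) →
      ((E.filter (· ∈ Fam)).card : ℝ)
        = ∑ T ∈ Finset.univ.filter (fun T : Submodule F (Fin n → F) => finrank F T = d),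
            c T * ((E.filter fun S => T ≤ S).card : ℝ) := by
    intro E hE
    rw [← Finset.sum_boole, Finset.sum_congr rfl fun S hS => hc S (hE S hS), Finset.sum_comm]
    have h : ∀ T : Submodule F (Fin n → F),
        (∑ S ∈ E, c T * (if finrank F T = d ∧ T ≤ S then (1 : ℝ) else 0))
          = if finrank F T = d then c T * ((E.filter fun S => T ≤ S).card : ℝ) else 0 := by
      intro T
      by_cases hT : finrank F T = d
      · rw [if_pos hT, ← Finset.mul_sum]
        congr 1
        rw [← Finset.sum_boole]
        exact Finset.sum_congr rfl fun S _ => by simp [hT]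
      · simp [hT]
    simp only [h]
    rw [← Finset.sum_filter]
  have claim1 : (Fam.card : ℝ) = C * gaussBinom F (n - d) (k - d) := by
    have hAF : A.filter (· ∈ Fam) = Fam := by
      ext S
      simp only [hA, Finset.mem_filter, Finset.mem_univ, true_and]
      exact ⟨fun h => h.2, fun h => ⟨hFk S h, h⟩⟩
    have hAk : ∀ S ∈ A, finrank F S = k := fun S hS => (Finset.mem_filter.mp hS).2
    have hcount : ∀ T ∈ Finset.univ.filter
        (fun T : Submodule F (Fin n → F) => finrank F T = d),
        (A.filter fun S => T ≤ S).card = gaussBinom F (n - d) (k - d) := by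
      intro T hT
      have hTd : finrank F T = d := (Finset.mem_filter.mp hT).2
      rw [hA, Finset.filter_filter, ← count_above hdk T hTd]
      congr 1
      apply Finset.filter_congr
      intro S _
      exact and_comm
    calc (Fam.card : ℝ) = ((A.filter (· ∈ Fam)).card : ℝ) := by rw [hAF]
      _ = ∑ T ∈ Finset.univ.filter (fun T : Submodule F (Fin n → F) => finrank F T = d),
            c T * ((A.filter fun S => T ≤ S).card : ℝ) := hsum A hAk
      _ = ∑ T ∈ Finset.univ.filter (fun T : Submodule F (Fin n → F) => finrank F T = d),
            c T * (gaussBinom F (n - d) (k - d) : ℝ) :=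
        Finset.sum_congr rfl fun T hT => by rw [hcount T hT]
      _ = C * gaussBinom F (n - d) (k - d) := by rw [hC, ← Finset.sum_mul]
  have claim2 : ((D.filter (· ∈ Fam)).card : ℝ) = C * lam := by
    calc ((D.filter (· ∈ Fam)).card : ℝ)
        = ∑ T ∈ Finset.univ.filter (fun T : Submodule F (Fin n → F) => finrank F T = d),
            c T * ((D.filter fun S => T ≤ S).card : ℝ) := hsum D hDk
      _ = ∑ T ∈ Finset.univ.filter (fun T : Submodule F (Fin n → F) => finrank F T = d),
            c T * (lam : ℝ) :=
        Finset.sum_congr rfl fun T hT => by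
          rw [hdesign T (Finset.mem_filter.mp hT).2]
      _ = C * lam := by rw [hC, ← Finset.sum_mul]
  have key : Fam.card * D.card = gaussBinom F n k * (D.filter (· ∈ Fam)).card := by
    have hr : ((Fam.card * D.card : ℕ) : ℝ)
        = ((gaussBinom F n k * (D.filter (· ∈ Fam)).card : ℕ) : ℝ) := by
      push_cast
      rw [claim1, claim2]
      have h3r : (gaussBinom F (n - d) (k - d) : ℝ) * D.card
          = (gaussBinom F n k : ℝ) * lam := by exact_mod_cast h3
      linear_combination C * h3r
    exact_mod_cast hr
  exact ⟨_, key⟩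
end

section
/- Let σ be a symplectic form on F_q^n (n ≥ 6) and let L_1, L_2 denote the sets of isotropic and nonisotropic 2-subspaces respectively. Define f = (1/(q^2+q+1)) Σ_{L∈L_1} x_L − ((q+1)/(q^2(q^2+q+1))) Σ_{L∈L_2} x_L, a function on 3-subspaces. Then f(Π) = 1 if Π is an isotropic plane and f(Π) = 0 if Π is a plane with a point as radical; in particular, the set of isotropic planes is a Boolean degree 2 set. -/
open Module
open scoped Classical

/-- A subspace `S` is isotropic for a bilinear form `σ` if `σ` vanishes identically on `S`. -/
def IsIsotropic {F : Type} [Field F] {n : ℕ} (σ : LinearMap.BilinForm F (Fin n → F))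
    (S : Submodule F (Fin n → F)) : Prop :=
  ∀ x ∈ S, ∀ y ∈ S, σ x y = 0

section Aux

set_option linter.unusedSectionVars false
set_option synthInstance.maxHeartbeats 400000
set_option maxHeartbeats 1000000

variable {F : Type} [Field F] [Fintype F] {n : ℕ}

lemma nat_id1 {q : ℕ} (h : 2 ≤ q) : (q + 1) * (q ^ 2 - q) = q ^ 3 - q := by
  have h1 : q ≤ q ^ 2 := Nat.le_self_pow two_ne_zero q
  have h2 : q ≤ q ^ 3 := Nat.le_self_pow three_ne_zero q
  zify [h1, h2]; ring

lemma nat_id2 {q : ℕ} (h : 2 ≤ q) : (q + 1) * (q - 1) = q ^ 2 - 1 := by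
  have h1 : 1 ≤ q := by omega
  have h2 : 1 ≤ q ^ 2 := Nat.one_le_pow _ _ (by omega)
  zify [h1, h2]; ring

lemma nat_id3 {q : ℕ} (h : 2 ≤ q) : (q ^ 2 + q + 1) * (q - 1) = q ^ 3 - 1 := by
  have h1 : 1 ≤ q := by omega
  have h2 : 1 ≤ q ^ 3 := Nat.one_le_pow _ _ (by omega)
  zify [h1, h2]; ring

lemma aux_skew (σ : LinearMap.BilinForm F (Fin n → F)) (halt : ∀ v, σ v v = 0)
    (x y : Fin n → F) : σ x y = - σ y x := by
  have h := halt (x + y)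
  simp only [map_add, LinearMap.add_apply] at h
  linear_combination h - halt x - halt y

/-- If `W = S ⊔ ⟨w⟩` with `S` in the radical of `W`, then `W` is isotropic. -/
lemma aux_iso_of_codim (σ : LinearMap.BilinForm F (Fin n → F)) (halt : ∀ v, σ v v = 0)
    (S W : Submodule F (Fin n → F)) (w : Fin n → F)
    (hS : S ≤ σ.orthogonal W) (hSW : S ≤ W)
    (hW : W ≤ S ⊔ Submodule.span F {w}) (hwW : w ∈ W) :
    ∀ x ∈ W, ∀ y ∈ W, σ x y = 0 := by
  intro x hx y hy
  obtain ⟨s1, hs1, z1, hz1, rfl⟩ := Submodule.mem_sup.mp (hW hx)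
  obtain ⟨s2, hs2, z2, hz2, rfl⟩ := Submodule.mem_sup.mp (hW hy)
  obtain ⟨a, rfl⟩ := Submodule.mem_span_singleton.mp hz1
  obtain ⟨b, rfl⟩ := Submodule.mem_span_singleton.mp hz2
  have h1 : σ w s1 = 0 := hS hs1 w hwW
  have h2 : σ w s2 = 0 := hS hs2 w hwW
  have h3 : σ s2 s1 = 0 := hS hs1 s2 (hSW hs2)
  have h4 : σ s1 s2 = 0 := by rw [aux_skew σ halt, h3, neg_zero]
  have h5 : σ s1 w = 0 := by rw [aux_skew σ halt, h1, neg_zero]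
  simp only [map_add, map_smul, LinearMap.add_apply, LinearMap.smul_apply, smul_eq_mul]
  rw [h4, h5, h2, halt]
  ring

/-- Counting vectors in `A` outside of `B ≤ A`. -/
lemma aux_card_diff (A B : Submodule F (Fin n → F)) (hBA : B ≤ A) :
    (Finset.univ.filter fun v : Fin n → F => v ∈ A ∧ v ∉ B).card
      = Fintype.card F ^ finrank F A - Fintype.card F ^ finrank F B := by
  have hA : (Finset.univ.filter fun v : Fin n → F => v ∈ A).card
      = Fintype.card F ^ finrank F A := by
    rw [← Fintype.card_subtype]
    rw [show Fintype.card {v : Fin n → F // v ∈ A} = Fintype.card A from rfl]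
    exact card_eq_pow_finrank
  have hB : (Finset.univ.filter fun v : Fin n → F => v ∈ A ∧ v ∈ B).card
      = Fintype.card F ^ finrank F B := by
    have h : (Finset.univ.filter fun v : Fin n → F => v ∈ A ∧ v ∈ B)
        = (Finset.univ.filter fun v : Fin n → F => v ∈ B) := by
      ext v; simp only [Finset.mem_filter, Finset.mem_univ, true_and]
      exact ⟨fun h => h.2, fun h => ⟨hBA h, h⟩⟩
    rw [h, ← Fintype.card_subtype]
    rw [show Fintype.card {v : Fin n → F // v ∈ B} = Fintype.card B from rfl]
    exact card_eq_pow_finrank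
  have key : (Finset.univ.filter fun v : Fin n → F => v ∈ A ∧ v ∉ B).card
      + (Finset.univ.filter fun v : Fin n → F => v ∈ A ∧ v ∈ B).card
      = (Finset.univ.filter fun v : Fin n → F => v ∈ A).card := by
    classical
    rw [show (Finset.univ.filter fun v : Fin n → F => v ∈ A ∧ v ∉ B)
        = (Finset.univ.filter fun v : Fin n → F => v ∈ A).filter (fun v => v ∉ B) by
      rw [Finset.filter_filter]]
    rw [show (Finset.univ.filter fun v : Fin n → F => v ∈ A ∧ v ∈ B)
        = (Finset.univ.filter fun v : Fin n → F => v ∈ A).filter (fun v => ¬ v ∉ B) by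
      rw [Finset.filter_filter]; congr 1; ext v; simp]
    exact Finset.card_filter_add_card_filter_not _
  have hle : Fintype.card F ^ finrank F B ≤ Fintype.card F ^ finrank F A := by
    apply Nat.pow_le_pow_right (Fintype.card_pos)
    exact Submodule.finrank_mono hBA
  omega

lemma aux_card_lines (Pl : Submodule F (Fin n → F)) :
    (Finset.univ.filter fun L : Submodule F (Fin n → F) => finrank F L = 1 ∧ L ≤ Pl).card
      * (Fintype.card F - 1) = Fintype.card F ^ finrank F Pl - 1 := by
  classical
  have hcount := Finset.card_eq_sum_card_fiberwise
    (f := fun v : Fin n → F => Submodule.span F {v})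
    (s := Finset.univ.filter fun v : Fin n → F => v ∈ Pl ∧ v ∉ (⊥ : Submodule F (Fin n → F)))
    (t := Finset.univ.filter fun L : Submodule F (Fin n → F) => finrank F L = 1 ∧ L ≤ Pl)
    (by
      intro v hv
      simp only [Finset.mem_coe, Finset.mem_filter, Finset.mem_univ, true_and, Submodule.mem_bot] at hv ⊢
      exact ⟨finrank_span_singleton hv.2, Submodule.span_le.mpr (by simpa using hv.1)⟩)
  have hfib : ∀ L ∈ Finset.univ.filter fun L : Submodule F (Fin n → F) =>
      finrank F L = 1 ∧ L ≤ Pl,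
      ((Finset.univ.filter fun v : Fin n → F =>
          v ∈ Pl ∧ v ∉ (⊥ : Submodule F (Fin n → F))).filter
        fun v => Submodule.span F {v} = L).card = Fintype.card F - 1 := by
    intro L hL
    simp only [Finset.mem_filter, Finset.mem_univ, true_and] at hL
    have h : ((Finset.univ.filter fun v : Fin n → F =>
          v ∈ Pl ∧ v ∉ (⊥ : Submodule F (Fin n → F))).filter
        fun v => Submodule.span F {v} = L)
        = Finset.univ.filter fun v : Fin n → F =>
            v ∈ L ∧ v ∉ (⊥ : Submodule F (Fin n → F)) := by
      ext v
      simp only [Finset.mem_filter, Finset.mem_univ, true_and, Submodule.mem_bot]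
      constructor
      · rintro ⟨⟨_, hv0⟩, rfl⟩
        exact ⟨Submodule.mem_span_singleton_self v, hv0⟩
      · rintro ⟨hvL, hv0⟩
        refine ⟨⟨hL.2 hvL, hv0⟩, ?_⟩
        apply Submodule.eq_of_le_of_finrank_le (Submodule.span_le.mpr (by simpa using hvL))
        rw [hL.1, finrank_span_singleton hv0]
    rw [h, aux_card_diff L ⊥ bot_le, finrank_bot, pow_zero, hL.1, pow_one]
  rw [Finset.sum_congr rfl hfib, Finset.sum_const, smul_eq_mul,
    aux_card_diff Pl ⊥ bot_le, finrank_bot, pow_zero] at hcount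
  exact hcount.symm

lemma aux_num_lines (Pl : Submodule F (Fin n → F)) {d : ℕ} (hd : finrank F Pl = d)
    (c : ℕ) (hc : c * (Fintype.card F - 1) = Fintype.card F ^ d - 1) :
    (Finset.univ.filter fun L : Submodule F (Fin n → F) => finrank F L = 1 ∧ L ≤ Pl).card
      = c := by
  have h := aux_card_lines Pl
  rw [hd, ← hc] at h
  have hq2 : 2 ≤ Fintype.card F := Fintype.one_lt_card
  exact Nat.eq_of_mul_eq_mul_right (by omega) h

lemma aux_sup_line (R : Submodule F (Fin n → F)) (hR : finrank F R = 1)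
    (v : Fin n → F) (hv : v ∉ R) :
    finrank F ↥(R ⊔ Submodule.span F {v}) = 2 := by
  have hv0 : v ≠ 0 := fun h => hv (h ▸ R.zero_mem)
  have hinf : R ⊓ Submodule.span F {v} = ⊥ := by
    rw [Submodule.eq_bot_iff]
    rintro x ⟨hxR, hxs⟩
    obtain ⟨c, rfl⟩ := Submodule.mem_span_singleton.mp hxs
    rcases eq_or_ne c 0 with rfl | hc
    · simp
    · exact absurd (by simpa [smul_smul, inv_mul_cancel₀ hc] using R.smul_mem c⁻¹ hxR) hv
  have h := Submodule.finrank_sup_add_finrank_inf_eq R (Submodule.span F {v})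
  rw [hinf, finrank_bot, hR, finrank_span_singleton hv0] at h
  omega

lemma aux_card_planes_through (R Pl : Submodule F (Fin n → F))
    (hR : finrank F R = 1) (h3 : finrank F Pl = 3) (hRPl : R ≤ Pl) :
    (Finset.univ.filter fun L : Submodule F (Fin n → F) =>
      finrank F L = 2 ∧ R ≤ L ∧ L ≤ Pl).card = Fintype.card F + 1 := by
  classical
  have hq2 : 2 ≤ Fintype.card F := Fintype.one_lt_card
  have hcount := Finset.card_eq_sum_card_fiberwise
    (f := fun v : Fin n → F => R ⊔ Submodule.span F {v})
    (s := Finset.univ.filter fun v : Fin n → F => v ∈ Pl ∧ v ∉ R)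
    (t := Finset.univ.filter fun L : Submodule F (Fin n → F) =>
      finrank F L = 2 ∧ R ≤ L ∧ L ≤ Pl)
    (by
      intro v hv
      simp only [Finset.mem_coe, Finset.mem_filter, Finset.mem_univ, true_and] at hv ⊢
      exact ⟨aux_sup_line R hR v hv.2, le_sup_left,
        sup_le hRPl (Submodule.span_le.mpr (by simpa using hv.1))⟩)
  have hfib : ∀ L ∈ Finset.univ.filter fun L : Submodule F (Fin n → F) =>
      finrank F L = 2 ∧ R ≤ L ∧ L ≤ Pl,
      ((Finset.univ.filter fun v : Fin n → F => v ∈ Pl ∧ v ∉ R).filter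
        fun v => R ⊔ Submodule.span F {v} = L).card = Fintype.card F ^ 2 - Fintype.card F := by
    intro L hL
    simp only [Finset.mem_filter, Finset.mem_univ, true_and] at hL
    have h : ((Finset.univ.filter fun v : Fin n → F => v ∈ Pl ∧ v ∉ R).filter
        fun v => R ⊔ Submodule.span F {v} = L)
        = Finset.univ.filter fun v : Fin n → F => v ∈ L ∧ v ∉ R := by
      ext v
      simp only [Finset.mem_filter, Finset.mem_univ, true_and]
      constructor
      · rintro ⟨⟨_, hvR⟩, rfl⟩
        exact ⟨Submodule.mem_sup_right (Submodule.mem_span_singleton_self v), hvR⟩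
      · rintro ⟨hvL, hvR⟩
        refine ⟨⟨hL.2.2 hvL, hvR⟩, ?_⟩
        apply Submodule.eq_of_le_of_finrank_le
          (sup_le hL.2.1 (Submodule.span_le.mpr (by simpa using hvL)))
        rw [hL.1, aux_sup_line R hR v hvR]
    rw [h, aux_card_diff L R hL.2.1, hL.1, hR, pow_one]
  rw [Finset.sum_congr rfl hfib, Finset.sum_const, smul_eq_mul,
    aux_card_diff Pl R hRPl, h3, hR, pow_one] at hcount
  have hcard : (Finset.univ.filter fun L : Submodule F (Fin n → F) =>
      finrank F L = 2 ∧ R ≤ L ∧ L ≤ Pl).card * (Fintype.card F ^ 2 - Fintype.card F)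
      = (Fintype.card F + 1) * (Fintype.card F ^ 2 - Fintype.card F) := by
    rw [← hcount, nat_id1 hq2]
  have hpos : 0 < Fintype.card F ^ 2 - Fintype.card F := by
    have : Fintype.card F < Fintype.card F ^ 2 := by nlinarith
    omega
  exact Nat.eq_of_mul_eq_mul_right hpos hcard

lemma aux_card_planes (Pl : Submodule F (Fin n → F)) (h3 : finrank F Pl = 3) :
    (Finset.univ.filter fun L : Submodule F (Fin n → F) => finrank F L = 2 ∧ L ≤ Pl).card
      = Fintype.card F ^ 2 + Fintype.card F + 1 := by
  classical
  have hq2 : 2 ≤ Fintype.card F := Fintype.one_lt_card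
  set P : Finset (Submodule F (Fin n → F) × Submodule F (Fin n → F)) :=
    (Finset.univ ×ˢ Finset.univ).filter fun p =>
      finrank F p.1 = 1 ∧ finrank F p.2 = 2 ∧ p.1 ≤ p.2 ∧ p.2 ≤ Pl with hP
  have hmemP : ∀ p : Submodule F (Fin n → F) × Submodule F (Fin n → F),
      p ∈ P ↔ finrank F p.1 = 1 ∧ finrank F p.2 = 2 ∧ p.1 ≤ p.2 ∧ p.2 ≤ Pl := by
    intro p
    simp [hP, Finset.mem_product]
  have hcount1 : P.card = (Fintype.card F ^ 2 + Fintype.card F + 1) * (Fintype.card F + 1) := by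
    have h := Finset.card_eq_sum_card_fiberwise (f := Prod.fst) (s := P)
      (t := Finset.univ.filter fun L : Submodule F (Fin n → F) => finrank F L = 1 ∧ L ≤ Pl)
      (by
        intro p hp
        rw [Finset.mem_coe, hmemP] at hp
        simp only [Finset.mem_coe, Finset.mem_filter, Finset.mem_univ, true_and]
        exact ⟨hp.1, le_trans hp.2.2.1 hp.2.2.2⟩)
    have hfib : ∀ R ∈ Finset.univ.filter fun L : Submodule F (Fin n → F) =>
        finrank F L = 1 ∧ L ≤ Pl,
        (P.filter fun p => p.1 = R).card = Fintype.card F + 1 := by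
      intro R hR
      simp only [Finset.mem_filter, Finset.mem_univ, true_and] at hR
      have hbij : (P.filter fun p => p.1 = R).card
          = (Finset.univ.filter fun L : Submodule F (Fin n → F) =>
              finrank F L = 2 ∧ R ≤ L ∧ L ≤ Pl).card := by
        apply Finset.card_bij (fun p _ => p.2)
        · intro p hp
          simp only [Finset.mem_filter] at hp
          obtain ⟨hpP, hp1⟩ := hp
          rw [hmemP] at hpP
          simp only [Finset.mem_filter, Finset.mem_univ, true_and]
          exact ⟨hpP.2.1, hp1 ▸ hpP.2.2.1, hpP.2.2.2⟩
        · intro p1 hp1 p2 hp2 h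
          simp only [Finset.mem_filter] at hp1 hp2
          exact Prod.ext (hp1.2.trans hp2.2.symm) h
        · intro L hL
          simp only [Finset.mem_filter, Finset.mem_univ, true_and] at hL
          refine ⟨(R, L), ?_, rfl⟩
          simp only [Finset.mem_filter]
          exact ⟨(hmemP (R, L)).mpr ⟨hR.1, hL.1, hL.2.1, hL.2.2⟩, trivial⟩
      rw [hbij, aux_card_planes_through R Pl hR.1 h3 hR.2]
    rw [Finset.sum_congr rfl hfib, Finset.sum_const, smul_eq_mul] at h
    rw [h, aux_num_lines Pl h3 (Fintype.card F ^ 2 + Fintype.card F + 1) (nat_id3 hq2)]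
  have hcount2 : P.card = (Finset.univ.filter fun L : Submodule F (Fin n → F) =>
      finrank F L = 2 ∧ L ≤ Pl).card * (Fintype.card F + 1) := by
    have h := Finset.card_eq_sum_card_fiberwise (f := Prod.snd) (s := P)
      (t := Finset.univ.filter fun L : Submodule F (Fin n → F) => finrank F L = 2 ∧ L ≤ Pl)
      (by
        intro p hp
        rw [Finset.mem_coe, hmemP] at hp
        simp only [Finset.mem_coe, Finset.mem_filter, Finset.mem_univ, true_and]
        exact ⟨hp.2.1, hp.2.2.2⟩)
    have hfib : ∀ L ∈ Finset.univ.filter fun L : Submodule F (Fin n → F) =>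
        finrank F L = 2 ∧ L ≤ Pl,
        (P.filter fun p => p.2 = L).card = Fintype.card F + 1 := by
      intro L hL
      simp only [Finset.mem_filter, Finset.mem_univ, true_and] at hL
      have hbij : (P.filter fun p => p.2 = L).card
          = (Finset.univ.filter fun R : Submodule F (Fin n → F) =>
              finrank F R = 1 ∧ R ≤ L).card := by
        apply Finset.card_bij (fun p _ => p.1)
        · intro p hp
          simp only [Finset.mem_filter] at hp
          obtain ⟨hpP, hp2⟩ := hp
          rw [hmemP] at hpP
          simp only [Finset.mem_filter, Finset.mem_univ, true_and]
          exact ⟨hpP.1, hp2 ▸ hpP.2.2.1⟩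
        · intro p1 hp1 p2 hp2 h
          simp only [Finset.mem_filter] at hp1 hp2
          exact Prod.ext h (hp1.2.trans hp2.2.symm)
        · intro R hR
          simp only [Finset.mem_filter, Finset.mem_univ, true_and] at hR
          refine ⟨(R, L), ?_, rfl⟩
          simp only [Finset.mem_filter]
          exact ⟨(hmemP (R, L)).mpr ⟨hR.1, hL.1, hR.2, hL.2⟩, trivial⟩
      rw [hbij, aux_num_lines L hL.1 (Fintype.card F + 1) (nat_id2 hq2)]
    rw [Finset.sum_congr rfl hfib, Finset.sum_const, smul_eq_mul] at h
    exact h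
  rw [hcount1] at hcount2
  exact Nat.eq_of_mul_eq_mul_right (by omega) hcount2.symm


lemma aux_inf_span_bot (R : Submodule F (Fin n → F)) (v : Fin n → F) (hv : v ∉ R) :
    R ⊓ Submodule.span F {v} = ⊥ := by
  rw [Submodule.eq_bot_iff]
  rintro x ⟨hxR, hxs⟩
  obtain ⟨c, rfl⟩ := Submodule.mem_span_singleton.mp hxs
  rcases eq_or_ne c 0 with rfl | hc
  · simp
  · exact absurd (by simpa [smul_smul, inv_mul_cancel₀ hc] using R.smul_mem c⁻¹ hxR) hv

lemma aux_sup_line' (R : Submodule F (Fin n → F)) (v : Fin n → F) (hv : v ∉ R) :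
    finrank F ↥(R ⊔ Submodule.span F {v}) = finrank F R + 1 := by
  have hv0 : v ≠ 0 := fun h => hv (h ▸ R.zero_mem)
  have h := Submodule.finrank_sup_add_finrank_inf_eq R (Submodule.span F {v})
  rw [aux_inf_span_bot R v hv, finrank_bot, finrank_span_singleton hv0] at h
  omega

lemma aux_rad_dim (σ : LinearMap.BilinForm F (Fin n → F)) (halt : ∀ v, σ v v = 0)
    (Pl : Submodule F (Fin n → F)) (h3 : finrank F Pl = 3)
    (hni : ¬ (∀ x ∈ Pl, ∀ y ∈ Pl, σ x y = 0)) :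
    finrank F ↥(Pl ⊓ σ.orthogonal Pl) = 1 := by
  set R := Pl ⊓ σ.orthogonal Pl with hRdef
  have hRle : R ≤ Pl := inf_le_left
  have hRorth : R ≤ σ.orthogonal Pl := inf_le_right
  have hfin : finrank F R ≤ 3 := h3 ▸ Submodule.finrank_mono hRle
  have hiso_of : Pl ≤ σ.orthogonal Pl → False := fun h =>
    hni (fun x hx y hy => h hy x hx)
  have h3ne : finrank F R ≠ 3 := by
    intro hEq
    have hR : R = Pl := Submodule.eq_of_le_of_finrank_le hRle (by omega)
    exact hiso_of (le_trans hR.ge hRorth)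
  have h2ne : finrank F R ≠ 2 := by
    intro hEq
    obtain ⟨w, hwPl, hwR⟩ : ∃ w ∈ Pl, w ∉ R := by
      by_contra h; push_neg at h
      have := Submodule.finrank_mono (show Pl ≤ R from h)
      omega
    have hsub : R ⊔ Submodule.span F {w} ≤ Pl :=
      sup_le hRle (Submodule.span_le.mpr (by simpa using hwPl))
    have hrank : finrank F ↥(R ⊔ Submodule.span F {w}) = 3 := by
      rw [aux_sup_line' R w hwR, hEq]
    have hPl : Pl ≤ R ⊔ Submodule.span F {w} :=
      (Submodule.eq_of_le_of_finrank_le hsub (by omega)).ge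
    exact hni (aux_iso_of_codim σ halt R Pl w hRorth hRle hPl hwPl)
  have h0ne : finrank F R ≠ 0 := by
    intro hEq
    have hbot : R = ⊥ := Submodule.finrank_eq_zero.mp hEq
    -- construct a nonzero radical vector from a basis
    let b : Basis (Fin 3) F ↥Pl := Module.finBasisOfFinrankEq F ↥Pl h3
    let e : Fin 3 → (Fin n → F) := fun i => (b i : Fin n → F)
    have hePl : ∀ i, e i ∈ Pl := fun i => (b i).2
    have hspan : Submodule.span F (Set.range e) = Pl := by
      have h1 : Submodule.span F (Set.range ⇑b) = (⊤ : Submodule F ↥Pl) := b.span_eq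
      have h2 := congrArg (Submodule.map Pl.subtype) h1
      rw [Submodule.map_span, Submodule.map_top, Submodule.range_subtype,
        ← Set.range_comp] at h2
      exact h2
    have hker : ∀ (φ : (Fin n → F) →ₗ[F] F), (∀ i, φ (e i) = 0) →
        ∀ z ∈ Pl, φ z = 0 := by
      intro φ hφ z hz
      have hle : Pl ≤ LinearMap.ker φ := by
        rw [← hspan, Submodule.span_le]
        rintro _ ⟨i, rfl⟩
        simpa using hφ i
      simpa using hle hz
    have hsk := aux_skew σ halt
    have hex : ∃ i j, σ (e i) (e j) ≠ 0 := by
      by_contra hall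
      push_neg at hall
      apply hni
      intro x hx y hy
      have h1 : ∀ i, ∀ z ∈ Pl, σ z (e i) = 0 := fun i =>
        hker (σ.flip (e i)) (fun j => by simpa using hall j i)
      exact hker (σ x) (fun i => h1 i x hx) y hy
    obtain ⟨i, j, hij⟩ := hex
    have hcoef : σ (e 0) (e 1) ≠ 0 ∨ σ (e 0) (e 2) ≠ 0 ∨ σ (e 1) (e 2) ≠ 0 := by
      fin_cases i <;> fin_cases j
      · exact absurd (halt _) hij
      · exact Or.inl hij
      · exact Or.inr (Or.inl hij)
      · have hij' : σ (e 1) (e 0) ≠ 0 := hij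
        exact Or.inl (fun h => hij' (by rw [hsk, h, neg_zero]))
      · exact absurd (halt _) hij
      · exact Or.inr (Or.inr hij)
      · have hij' : σ (e 2) (e 0) ≠ 0 := hij
        exact Or.inr (Or.inl (fun h => hij' (by rw [hsk, h, neg_zero])))
      · have hij' : σ (e 2) (e 1) ≠ 0 := hij
        exact Or.inr (Or.inr (fun h => hij' (by rw [hsk, h, neg_zero])))
      · exact absurd (halt _) hij
    set x0 : Fin n → F :=
      σ (e 1) (e 2) • e 0 - σ (e 0) (e 2) • e 1 + σ (e 0) (e 1) • e 2 with hx0def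
    have hx0Pl : x0 ∈ Pl :=
      Pl.add_mem (Pl.sub_mem (Pl.smul_mem _ (hePl 0)) (Pl.smul_mem _ (hePl 1)))
        (Pl.smul_mem _ (hePl 2))
    have hei : ∀ i, σ (e i) x0 = 0 := by
      intro i
      fin_cases i
      · show σ (e 0) x0 = 0
        simp only [hx0def, map_add, map_sub, map_smul, smul_eq_mul]
        rw [halt]
        ring
      · show σ (e 1) x0 = 0
        simp only [hx0def, map_add, map_sub, map_smul, smul_eq_mul]
        rw [hsk (e 1) (e 0), halt]
        ring
      · show σ (e 2) x0 = 0
        simp only [hx0def, map_add, map_sub, map_smul, smul_eq_mul]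
        rw [hsk (e 2) (e 0), hsk (e 2) (e 1), halt]
        ring
    have hx0orth : x0 ∈ σ.orthogonal Pl := by
      intro z hz
      exact hker (σ.flip x0) (fun i => by simpa using hei i) z hz
    have hx0ne : x0 ≠ 0 := by
      intro h0
      have hy0 : (σ (e 1) (e 2) • b 0 - σ (e 0) (e 2) • b 1 + σ (e 0) (e 1) • b 2 : ↥Pl)
          = 0 := by
        apply Subtype.ext
        push_cast
        rw [← h0, hx0def]
      have hr0 := congrArg (fun z : ↥Pl => b.repr z 0) hy0
      have hr1 := congrArg (fun z : ↥Pl => b.repr z 1) hy0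
      have hr2 := congrArg (fun z : ↥Pl => b.repr z 2) hy0
      simp only [map_add, map_sub, map_smul, Basis.repr_self, Finsupp.add_apply,
        Finsupp.sub_apply, Finsupp.smul_apply, Finsupp.single_apply, smul_eq_mul,
        Finsupp.coe_zero, Pi.zero_apply] at hr0 hr1 hr2
      norm_num [show ((0:Fin 3) = 2) ↔ False from by decide,
        show ((1:Fin 3) = 2) ↔ False from by decide,
        show ((2:Fin 3) = 1) ↔ False from by decide,
        show ((2:Fin 3) = 0) ↔ False from by decide] at hr0 hr1 hr2
      rcases hcoef with h | h | h
      · exact h hr2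
      · exact h hr1
      · exact h hr0
    have : x0 ∈ R := ⟨hx0Pl, hx0orth⟩
    rw [hbot] at this
    exact hx0ne (by simpa using this)
  omega
lemma aux_iso_iff (σ : LinearMap.BilinForm F (Fin n → F)) (halt : ∀ v, σ v v = 0)
    (Pl : Submodule F (Fin n → F)) (h3 : finrank F Pl = 3)
    (hrad : finrank F ↥(Pl ⊓ σ.orthogonal Pl) = 1)
    (L : Submodule F (Fin n → F)) (h2 : finrank F L = 2) (hL : L ≤ Pl) :
    (∀ x ∈ L, ∀ y ∈ L, σ x y = 0) ↔ Pl ⊓ σ.orthogonal Pl ≤ L := by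
  set R := Pl ⊓ σ.orthogonal Pl with hRdef
  have hRPl : R ≤ Pl := inf_le_left
  have hRorth : R ≤ σ.orthogonal Pl := inf_le_right
  constructor
  · intro hiso
    by_contra hnle
    have hbot : R ⊓ L = ⊥ := by
      have hlt : R ⊓ L < R :=
        lt_of_le_of_ne inf_le_left (fun h => hnle (le_trans h.ge inf_le_right))
      have := Submodule.finrank_lt_finrank_of_lt hlt
      rw [hrad] at this
      exact Submodule.finrank_eq_zero.mp (by omega)
    have hsupR : finrank F ↥(R ⊔ L) = 3 := by
      have := Submodule.finrank_sup_add_finrank_inf_eq R L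
      rw [hbot, finrank_bot, hrad, h2] at this
      omega
    have hsup : R ⊔ L = Pl :=
      Submodule.eq_of_le_of_finrank_le (sup_le hRPl hL) (by omega)
    have hiso' : ∀ x ∈ Pl, ∀ y ∈ Pl, σ x y = 0 := by
      intro x hx y hy
      rw [← hsup] at hx hy
      obtain ⟨r1, hr1, l1, hl1, rfl⟩ := Submodule.mem_sup.mp hx
      obtain ⟨r2, hr2, l2, hl2, rfl⟩ := Submodule.mem_sup.mp hy
      have e1 : σ r1 r2 = 0 := (hRorth hr2) r1 (hRPl hr1)
      have e2 : σ l1 r2 = 0 := (hRorth hr2) l1 (hL hl1)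
      have e3 : σ r1 l2 = 0 := by
        rw [aux_skew σ halt]
        rw [(hRorth hr1) l2 (hL hl2), neg_zero]
      have e4 : σ l1 l2 = 0 := hiso l1 hl1 l2 hl2
      simp only [map_add, LinearMap.add_apply]
      rw [e1, e2, e3, e4]
      ring
    have hPlOrth : Pl ≤ σ.orthogonal Pl := fun y hy nn hn => hiso' nn hn y hy
    have hReq : R = Pl := le_antisymm hRPl (le_inf le_rfl hPlOrth)
    rw [hReq, h3] at hrad
    omega
  · intro hRL
    obtain ⟨w, hwL, hwR⟩ : ∃ w ∈ L, w ∉ R := by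
      by_contra h; push_neg at h
      have := Submodule.finrank_mono (show L ≤ R from h)
      omega
    have hsub : R ⊔ Submodule.span F {w} ≤ L :=
      sup_le hRL (Submodule.span_le.mpr (by simpa using hwL))
    have hrank : finrank F ↥(R ⊔ Submodule.span F {w}) = 2 := by
      rw [aux_sup_line' R w hwR, hrad]
    have hle : L ≤ R ⊔ Submodule.span F {w} :=
      (Submodule.eq_of_le_of_finrank_le hsub (by omega)).ge
    have hRorthL : R ≤ σ.orthogonal L := fun x hx nn hn => (hRorth hx) nn (hL hn)
    exact aux_iso_of_codim σ halt R L w hRorthL hRL hle hwL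


end Aux

set_option maxHeartbeats 2000000 in
/-- With `L₁, L₂` the isotropic resp. nonisotropic lines of a symplectic form `σ` on `F_q^n`
(`n ≥ 6`), the degree 2 function
`f = (1/(q²+q+1)) Σ_{L∈L₁} x_L − ((q+1)/(q²(q²+q+1))) Σ_{L∈L₂} x_L`
satisfies `f(Π) = 1` on isotropic planes and `f(Π) = 0` on planes with a point as radical;
in particular the set of isotropic planes is a Boolean degree 2 set. -/
theorem stmt_9 (F : Type) [Field F] [Fintype F] (n : ℕ) (hn : 6 ≤ n)
    (σ : LinearMap.BilinForm F (Fin n → F)) (halt : ∀ v, σ v v = 0)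
    (q : ℕ) (hq : q = Fintype.card F)
    (f : Submodule F (Fin n → F) → ℝ)
    (hfdef : ∀ Pl : Submodule F (Fin n → F),
      f Pl = (1 / (q ^ 2 + q + 1 : ℝ)) *
          ∑ L ∈ Finset.univ.filter (fun L : Submodule F (Fin n → F) =>
              finrank F L = 2 ∧ IsIsotropic σ L), (if L ≤ Pl then (1 : ℝ) else 0)
        - ((q + 1 : ℝ) / ((q : ℝ) ^ 2 * (q ^ 2 + q + 1 : ℝ))) *
          ∑ L ∈ Finset.univ.filter (fun L : Submodule F (Fin n → F) =>
              finrank F L = 2 ∧ ¬ IsIsotropic σ L), (if L ≤ Pl then (1 : ℝ) else 0)) :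
    (∀ Pl : Submodule F (Fin n → F), finrank F Pl = 3 → IsIsotropic σ Pl → f Pl = 1) ∧
    (∀ Pl : Submodule F (Fin n → F), finrank F Pl = 3 →
      finrank F (Pl ⊓ σ.orthogonal Pl : Submodule F (Fin n → F)) = 1 → f Pl = 0) ∧
    (∃ c : Submodule F (Fin n → F) → ℝ, ∀ Pl : Submodule F (Fin n → F), finrank F Pl = 3 →
      (if IsIsotropic σ Pl then (1 : ℝ) else 0) = ∑ T : Submodule F (Fin n → F),
        c T * (if finrank F T = 2 ∧ T ≤ Pl then (1 : ℝ) else 0)) := by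
  classical
  have hq2 : 2 ≤ q := hq ▸ Fintype.one_lt_card
  have hQpos : (0:ℝ) < (q:ℝ)^2 + (q:ℝ) + 1 := by positivity
  have hq0 : (q : ℝ) ≠ 0 := Nat.cast_ne_zero.mpr (by omega)
  have part1 : ∀ Pl : Submodule F (Fin n → F), finrank F Pl = 3 → IsIsotropic σ Pl →
      f Pl = 1 := by
    intro Pl h3 hiso
    rw [hfdef Pl]
    have hS1 : ∑ L ∈ Finset.univ.filter (fun L : Submodule F (Fin n → F) =>
        finrank F L = 2 ∧ IsIsotropic σ L), (if L ≤ Pl then (1:ℝ) else 0)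
        = ((q:ℝ)^2 + (q:ℝ) + 1) := by
      rw [Finset.sum_boole, Finset.filter_filter]
      have he : (Finset.univ.filter fun L : Submodule F (Fin n → F) =>
          (finrank F L = 2 ∧ IsIsotropic σ L) ∧ L ≤ Pl)
          = Finset.univ.filter fun L : Submodule F (Fin n → F) =>
            finrank F L = 2 ∧ L ≤ Pl := by
        ext L
        simp only [Finset.mem_filter, Finset.mem_univ, true_and]
        constructor
        · rintro ⟨⟨h1, _⟩, h2⟩; exact ⟨h1, h2⟩
        · rintro ⟨h1, h2⟩
          exact ⟨⟨h1, fun x hx y hy => hiso x (h2 hx) y (h2 hy)⟩, h2⟩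
      rw [he, aux_card_planes Pl h3, hq]
      push_cast
      ring
    have hS2 : ∑ L ∈ Finset.univ.filter (fun L : Submodule F (Fin n → F) =>
        finrank F L = 2 ∧ ¬ IsIsotropic σ L), (if L ≤ Pl then (1:ℝ) else 0) = 0 := by
      rw [Finset.sum_boole, Finset.filter_filter]
      have he : (Finset.univ.filter fun L : Submodule F (Fin n → F) =>
          (finrank F L = 2 ∧ ¬ IsIsotropic σ L) ∧ L ≤ Pl) = ∅ := by
        rw [Finset.filter_eq_empty_iff]
        rintro L - ⟨⟨h1, hni⟩, h2⟩
        exact hni (fun x hx y hy => hiso x (h2 hx) y (h2 hy))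
      rw [he]
      simp
    rw [hS1, hS2, mul_zero, sub_zero]
    have hne : ((q:ℝ)^2 + (q:ℝ) + 1) ≠ 0 := hQpos.ne'
    field_simp
  have part2 : ∀ Pl : Submodule F (Fin n → F), finrank F Pl = 3 →
      finrank F (Pl ⊓ σ.orthogonal Pl : Submodule F (Fin n → F)) = 1 → f Pl = 0 := by
    intro Pl h3 hrad
    rw [hfdef Pl]
    have hisoeq : (Finset.univ.filter fun L : Submodule F (Fin n → F) =>
        (finrank F L = 2 ∧ IsIsotropic σ L) ∧ L ≤ Pl)
        = Finset.univ.filter fun L : Submodule F (Fin n → F) =>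
          finrank F L = 2 ∧ (Pl ⊓ σ.orthogonal Pl) ≤ L ∧ L ≤ Pl := by
      ext L
      simp only [Finset.mem_filter, Finset.mem_univ, true_and]
      constructor
      · rintro ⟨⟨h1, hLiso⟩, h2⟩
        exact ⟨h1, (aux_iso_iff σ halt Pl h3 hrad L h1 h2).mp hLiso, h2⟩
      · rintro ⟨h1, hRL, h2⟩
        exact ⟨⟨h1, (aux_iso_iff σ halt Pl h3 hrad L h1 h2).mpr hRL⟩, h2⟩
    have hcard1 : (Finset.univ.filter fun L : Submodule F (Fin n → F) =>
        (finrank F L = 2 ∧ IsIsotropic σ L) ∧ L ≤ Pl).card = q + 1 := by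
      rw [hisoeq, aux_card_planes_through _ Pl hrad h3 inf_le_left, hq]
    have hsplit : (Finset.univ.filter fun L : Submodule F (Fin n → F) =>
        (finrank F L = 2 ∧ IsIsotropic σ L) ∧ L ≤ Pl).card
        + (Finset.univ.filter fun L : Submodule F (Fin n → F) =>
            (finrank F L = 2 ∧ ¬ IsIsotropic σ L) ∧ L ≤ Pl).card
        = (Finset.univ.filter fun L : Submodule F (Fin n → F) =>
            finrank F L = 2 ∧ L ≤ Pl).card := by
      rw [show (Finset.univ.filter fun L : Submodule F (Fin n → F) =>
          (finrank F L = 2 ∧ IsIsotropic σ L) ∧ L ≤ Pl)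
          = (Finset.univ.filter fun L : Submodule F (Fin n → F) =>
              finrank F L = 2 ∧ L ≤ Pl).filter (fun L => IsIsotropic σ L) by
        rw [Finset.filter_filter]; ext L
        simp only [Finset.mem_filter, Finset.mem_univ, true_and]; tauto]
      rw [show (Finset.univ.filter fun L : Submodule F (Fin n → F) =>
          (finrank F L = 2 ∧ ¬ IsIsotropic σ L) ∧ L ≤ Pl)
          = (Finset.univ.filter fun L : Submodule F (Fin n → F) =>
              finrank F L = 2 ∧ L ≤ Pl).filter (fun L => ¬ IsIsotropic σ L) by
        rw [Finset.filter_filter]; ext L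
        simp only [Finset.mem_filter, Finset.mem_univ, true_and]; tauto]
      exact Finset.card_filter_add_card_filter_not _
    have hcard2 : (Finset.univ.filter fun L : Submodule F (Fin n → F) =>
        (finrank F L = 2 ∧ ¬ IsIsotropic σ L) ∧ L ≤ Pl).card = q ^ 2 := by
      rw [hcard1, aux_card_planes Pl h3, ← hq] at hsplit
      omega
    rw [Finset.sum_boole, Finset.filter_filter, Finset.sum_boole, Finset.filter_filter,
      hcard1, hcard2]
    push_cast
    field_simp
    ring
  set c : Submodule F (Fin n → F) → ℝ := fun T =>
    if finrank F T = 2 ∧ IsIsotropic σ T then (1 / ((q:ℝ)^2 + (q:ℝ) + 1))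
    else if finrank F T = 2 then -(((q:ℝ) + 1) / ((q:ℝ)^2 * ((q:ℝ)^2 + (q:ℝ) + 1)))
    else 0 with hc
  refine ⟨part1, part2, c, ?_⟩
  intro Pl h3
  set A : Finset (Submodule F (Fin n → F)) :=
    Finset.univ.filter (fun T : Submodule F (Fin n → F) =>
      finrank F T = 2 ∧ T ≤ Pl) with hA
  have hfval : (∑ T : Submodule F (Fin n → F),
      c T * (if finrank F T = 2 ∧ T ≤ Pl then (1:ℝ) else 0)) = f Pl := by
    have h1 : (∑ T : Submodule F (Fin n → F),
        c T * (if finrank F T = 2 ∧ T ≤ Pl then (1:ℝ) else 0)) = ∑ T ∈ A, c T := by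
      rw [hA, Finset.sum_filter]
      apply Finset.sum_congr rfl
      intro T _
      by_cases h : finrank F T = 2 ∧ T ≤ Pl <;> simp [h]
    have h2 : (∑ T ∈ A, c T)
        = ((A.filter (fun T => IsIsotropic σ T)).card : ℝ) * (1/((q:ℝ)^2+(q:ℝ)+1))
          + ((A.filter (fun T => ¬ IsIsotropic σ T)).card : ℝ)
            * (-(((q:ℝ)+1)/((q:ℝ)^2*((q:ℝ)^2+(q:ℝ)+1)))) := by
      rw [← Finset.sum_filter_add_sum_filter_not A (fun T => IsIsotropic σ T) c]
      congr 1
      · have hval : ∀ T ∈ A.filter (fun T => IsIsotropic σ T),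
            c T = 1/((q:ℝ)^2+(q:ℝ)+1) := by
          intro T hT
          simp only [hA, Finset.mem_filter, Finset.mem_univ, true_and] at hT
          simp [hc, hT.1.1, hT.2]
        rw [Finset.sum_congr rfl hval, Finset.sum_const, nsmul_eq_mul]
      · have hval : ∀ T ∈ A.filter (fun T => ¬ IsIsotropic σ T),
            c T = -(((q:ℝ)+1)/((q:ℝ)^2*((q:ℝ)^2+(q:ℝ)+1))) := by
          intro T hT
          simp only [hA, Finset.mem_filter, Finset.mem_univ, true_and] at hT
          simp [hc, hT.1.1, hT.2]
        rw [Finset.sum_congr rfl hval, Finset.sum_const, nsmul_eq_mul]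
    have h3 : ∑ L ∈ Finset.univ.filter (fun L : Submodule F (Fin n → F) =>
        finrank F L = 2 ∧ IsIsotropic σ L), (if L ≤ Pl then (1:ℝ) else 0)
        = ((A.filter (fun T => IsIsotropic σ T)).card : ℝ) := by
      rw [Finset.sum_boole, Finset.filter_filter]
      norm_cast
      apply congrArg Finset.card
      ext L
      simp only [hA, Finset.mem_filter, Finset.mem_univ, true_and, Finset.filter_filter]
      tauto
    have h4 : ∑ L ∈ Finset.univ.filter (fun L : Submodule F (Fin n → F) =>
        finrank F L = 2 ∧ ¬ IsIsotropic σ L), (if L ≤ Pl then (1:ℝ) else 0)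
        = ((A.filter (fun T => ¬ IsIsotropic σ T)).card : ℝ) := by
      rw [Finset.sum_boole, Finset.filter_filter]
      norm_cast
      apply congrArg Finset.card
      ext L
      simp only [hA, Finset.mem_filter, Finset.mem_univ, true_and, Finset.filter_filter]
      tauto
    rw [h1, h2, hfdef Pl, h3, h4]
    ring
  rw [hfval]
  by_cases hiso : IsIsotropic σ Pl
  · rw [if_pos hiso, part1 Pl h3 hiso]
  · rw [if_neg hiso, part2 Pl h3 (aux_rad_dim σ halt Pl h3 hiso)]
end

section
/- In V = F_q^6, fix a point P, a plane Π, and a hyperplane H with P ⊆ Π ⊆ H. Let Π_1 be the set of planes not contained in H which meet Π in a line through P, and Π_2 the set of planes contained in H which meet Π in exactly a point different from P. Then |Π_1 ∪ Π_2| = q^3(q+1) + (q^2+q)q^4 = (q^2+1)·q^3(q+1). -/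
open Module


set_option linter.unusedSectionVars false
set_option maxHeartbeats 1000000

open Module Submodule

section helpers

lemma geom_aux' {q : ℕ} (hq : 1 ≤ q) (n : ℕ) :
    (q - 1) * ∑ i ∈ Finset.range n, q ^ i = q ^ n - 1 := by
  induction n with
  | zero => simp
  | succ n ih =>
    rw [Finset.sum_range_succ, Nat.mul_add, ih, pow_succ]
    have h1 : 1 ≤ q ^ n := Nat.one_le_pow _ _ hq
    have h2 : q ^ n ≤ q ^ n * q := Nat.le_mul_of_pos_right _ hq
    have h3 : (q - 1) * q ^ n = q ^ n * q - q ^ n := by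
      rw [Nat.sub_mul, one_mul, Nat.mul_comm]
    omega

lemma card_subtype_ne' {α : Type*} [Fintype α] [DecidableEq α] (a : α) :
    Nat.card {x : α // x ≠ a} = Fintype.card α - 1 := by
  rw [Nat.card_eq_fintype_card]
  have h1 : Fintype.card {x : α // x = a} = 1 := Fintype.card_subtype_eq a
  have h2 := Fintype.card_subtype_compl (fun x : α => x = a)
  rw [h1] at h2
  exact h2

lemma natCard_sigma' {ι : Type*} [Fintype ι] {f : ι → Type*} [∀ i, Finite (f i)] :
    Nat.card (Σ i, f i) = ∑ i, Nat.card (f i) := by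
  letI := fun i => Fintype.ofFinite (f i)
  simp [Nat.card_eq_fintype_card]

lemma natCard_fibers' {α β : Type*} [Finite α] [Finite β] (f : α → β) (c : ℕ)
    (h : ∀ b, Nat.card {a // f a = b} = c) : Nat.card α = Nat.card β * c := by
  letI := Fintype.ofFinite β
  rw [← Nat.card_congr (Equiv.sigmaFiberEquiv f), natCard_sigma']
  simp only [h, Finset.sum_const, smul_eq_mul, Nat.card_eq_fintype_card, Finset.card_univ]

lemma natCard_split' {α : Type*} [Finite α] (p q : α → Prop) :
    Nat.card {x // p x} = Nat.card {x // p x ∧ q x} + Nat.card {x // p x ∧ ¬ q x} := by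
  classical
  rw [← Nat.card_sum]
  apply Nat.card_congr
  refine (Equiv.subtypeEquivRight (fun a => ?_)).trans (subtypeOrEquiv _ _ ?_)
  · tauto
  · rw [Pi.disjoint_iff]
    intro a
    rw [Prop.disjoint_iff]
    tauto

lemma natCard_or' {α : Type*} [Finite α] (p q : α → Prop) (h : ∀ a, ¬ (p a ∧ q a)) :
    Nat.card {x // p x ∨ q x} = Nat.card {x // p x} + Nat.card {x // q x} := by
  classical
  rw [← Nat.card_sum]
  apply Nat.card_congr
  refine subtypeOrEquiv _ _ ?_
  rw [Pi.disjoint_iff]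
  intro a
  rw [Prop.disjoint_iff]
  exact h a

end helpers

section aux
variable {F : Type} [Field F] [Fintype F]
variable {M : Type} [AddCommGroup M] [Module F M] [Finite M]

instance finSubmodule' : Finite (Submodule F M) :=
  Finite.of_injective (fun p => (p : Set M)) SetLike.coe_injective

instance finQuot' (p : Submodule F M) : Finite (M ⧸ p) :=
  Finite.of_surjective _ (Submodule.mkQ_surjective p)

instance finHom' {N P : Type*} [AddCommGroup N] [Module F N] [Finite N]
    [AddCommGroup P] [Module F P] [Finite P] : Finite (N →ₗ[F] P) :=
  Finite.of_injective (fun f => (f : N → P)) DFunLike.coe_injective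

lemma card_points'' {n : ℕ} (hn : finrank F M = n) :
    Nat.card {p : Submodule F M // finrank F p = 1} =
      ∑ i ∈ Finset.range n, Fintype.card F ^ i := by
  classical
  letI : Fintype M := Fintype.ofFinite M
  have hcM : Nat.card {v : M // v ≠ 0} = Fintype.card F ^ finrank F M - 1 := by
    rw [card_subtype_ne', ← card_eq_pow_finrank (K := F)]
  set ι := {p : Submodule F M // finrank F p = 1}
  let f : {v : M // v ≠ 0} → ι := fun v => ⟨Submodule.span F {v.1}, finrank_span_singleton v.2⟩
  have he : ∀ p : ι, Nat.card {v : {v : M // v ≠ 0} // f v = p} = Fintype.card F - 1 := by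
    intro p
    have : FiniteDimensional F p.1 := inferInstance
    have hfe : {v : {v : M // v ≠ 0} // f v = p} ≃ {w : p.1 // w ≠ 0} :=
      { toFun := fun v => ⟨⟨v.1.1, by
          have : Submodule.span F {v.1.1} = p.1 := congrArg Subtype.val v.2
          exact this ▸ Submodule.mem_span_singleton_self _⟩,
          fun h => v.1.2 (congrArg Subtype.val h)⟩
        invFun := fun w => ⟨⟨w.1.1, fun h => w.2 (Subtype.ext h)⟩, by
          apply Subtype.ext
          apply Submodule.eq_of_le_of_finrank_eq
          · rw [Submodule.span_le, Set.singleton_subset_iff]; exact w.1.2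
          · rw [finrank_span_singleton (fun h => w.2 (Subtype.ext h)), p.2]⟩
        left_inv := fun v => by ext; rfl
        right_inv := fun w => by ext; rfl }
    rw [Nat.card_congr hfe]
    letI : Fintype p.1 := Fintype.ofFinite p.1
    rw [card_subtype_ne' (0 : p.1), card_eq_pow_finrank (K := F) (V := p.1), p.2, pow_one]
  have hq : 1 < Fintype.card F := Fintype.one_lt_card
  letI : Fintype ι := Fintype.ofFinite ι
  have key := Nat.card_congr (Equiv.sigmaFiberEquiv f)
  rw [natCard_sigma'] at key
  simp only [he, Finset.sum_const, smul_eq_mul] at key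
  rw [hcM, Finset.card_univ] at key
  apply Nat.eq_of_mul_eq_mul_left (show 0 < Fintype.card F - 1 by omega)
  rw [geom_aux' (by omega), ← hn, Nat.card_eq_fintype_card, ← key, Nat.mul_comm]

lemma finrank_comap_mkQ' (L : Submodule F M) (x : Submodule F (M ⧸ L)) :
    finrank F (Submodule.comap L.mkQ x) = finrank F x + finrank F L := by
  let f : (Submodule.comap L.mkQ x) →ₗ[F] M ⧸ L := L.mkQ ∘ₗ (Submodule.comap L.mkQ x).subtype
  have hr : LinearMap.range f = x := by
    rw [LinearMap.range_comp, Submodule.range_subtype,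
      Submodule.map_comap_eq_of_surjective (Submodule.mkQ_surjective L)]
  have hk : LinearMap.ker f = Submodule.comap (Submodule.comap L.mkQ x).subtype L := by
    rw [LinearMap.ker_comp, Submodule.ker_mkQ]
  have hL : L ≤ Submodule.comap L.mkQ x := by
    intro v hv
    simp only [Submodule.mem_comap, Submodule.mkQ_apply]
    rw [Submodule.Quotient.mk_eq_zero L |>.2 hv]
    exact x.zero_mem
  have h3 := LinearMap.finrank_range_add_finrank_ker f
  rw [hr, hk] at h3
  rw [← h3]
  congr 1
  exact (Submodule.comapSubtypeEquivOfLe hL).finrank_eq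

lemma card_restrict' (W : Submodule F M) (Pred : Submodule F M → Prop)
    (Pred' : Submodule F W → Prop)
    (h : ∀ x : Submodule F W, Pred (x.map W.subtype) ↔ Pred' x) :
    Nat.card {S : Submodule F M // Pred S ∧ S ≤ W} = Nat.card {x : Submodule F W // Pred' x} := by
  apply Nat.card_congr
  refine (Equiv.subtypeEquivRight (fun S => and_comm)).trans ?_
  refine ((Equiv.subtypeSubtypeEquivSubtypeInter (fun S => S ≤ W) Pred).symm.trans ?_)
  exact ((Submodule.MapSubtype.orderIso W).toEquiv.subtypeEquiv (fun x => (h x).symm)).symm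

lemma card_quot' (L : Submodule F M) (Pred : Submodule F M → Prop)
    (Pred' : Submodule F (M ⧸ L) → Prop)
    (h : ∀ x : Submodule F (M ⧸ L), Pred (x.comap L.mkQ) ↔ Pred' x) :
    Nat.card {S : Submodule F M // Pred S ∧ L ≤ S} =
      Nat.card {x : Submodule F (M ⧸ L) // Pred' x} := by
  apply Nat.card_congr
  refine (Equiv.subtypeEquivRight (fun S => and_comm)).trans ?_
  refine ((Equiv.subtypeSubtypeEquivSubtypeInter (fun S => L ≤ S) Pred).symm.trans ?_)
  exact ((Submodule.comapMkQRelIso L).toEquiv.subtypeEquiv (fun x => (h x).symm)).symm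

lemma card_isCompl' (p : Submodule F M) :
    Nat.card {x : Submodule F M // IsCompl p x} =
      Fintype.card F ^ (finrank F (M ⧸ p) * finrank F p) := by
  obtain ⟨c, hc⟩ := Submodule.exists_isCompl p
  set π0 := p.isComplEquivProj ⟨c, hc⟩ with hπ0
  have e : {f : M →ₗ[F] p // ∀ x : p, f x = x} ≃ ((M ⧸ p) →ₗ[F] p) :=
    { toFun := fun f => Submodule.liftQ p (f.1 - π0.1) (by
        intro v hv
        simp only [LinearMap.mem_ker, LinearMap.sub_apply]
        rw [f.2 ⟨v, hv⟩, π0.2 ⟨v, hv⟩, sub_self])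
      invFun := fun g => ⟨π0.1 + g ∘ₗ p.mkQ, by
        intro x
        simp only [LinearMap.add_apply, LinearMap.comp_apply, Submodule.mkQ_apply]
        rw [π0.2 x, (Submodule.Quotient.mk_eq_zero p).2 x.2, map_zero, add_zero]⟩
      left_inv := fun f => by
        apply Subtype.ext
        apply LinearMap.ext
        intro v
        simp only [LinearMap.add_apply, LinearMap.comp_apply, Submodule.mkQ_apply,
          Submodule.liftQ_apply, LinearMap.sub_apply]
        abel
      right_inv := fun g => by
        apply LinearMap.ext
        intro z
        obtain ⟨v, rfl⟩ := Submodule.mkQ_surjective p z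
        simp only [Submodule.mkQ_apply, Submodule.liftQ_apply, LinearMap.sub_apply,
          LinearMap.add_apply, LinearMap.comp_apply]
        abel_nf }
  rw [Nat.card_congr ((p.isComplEquivProj).trans e)]
  letI : Fintype ((M ⧸ p) →ₗ[F] p) := Fintype.ofFinite _
  rw [Nat.card_eq_fintype_card, card_eq_pow_finrank (K := F), Module.finrank_linearMap]

end aux

section counts
variable {F : Type} [Field F] [Fintype F]
variable {M : Type} [AddCommGroup M] [Module F M] [Finite M]

lemma count_fiber1 (L H : Submodule F M) (hLH : L ≤ H) (hL : finrank F L = 2)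
    (hH : finrank F H = 5) (hM : finrank F M = 6) :
    Nat.card {S : Submodule F M // (finrank F S = 3 ∧ ¬ S ≤ H) ∧ L ≤ S} =
      Fintype.card F ^ 3 := by
  set H' := Submodule.map L.mkQ H with hH'def
  have hcomapH : Submodule.comap L.mkQ H' = H := by
    rw [hH'def, Submodule.comap_map_mkQ, sup_eq_right.2 hLH]
  have hQdim : finrank F (M ⧸ L) = 4 := by
    have := Submodule.finrank_quotient_add_finrank L
    rw [hL, hM] at this; omega
  have hH'dim : finrank F H' = 3 := by
    have := finrank_comap_mkQ' L H'
    rw [hcomapH, hH, hL] at this; omega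
  have step := card_quot' L (fun S => finrank F S = 3 ∧ ¬ S ≤ H)
      (fun x => finrank F x = 1 ∧ ¬ x ≤ H') ?_
  · rw [step]
    have split := natCard_split' (fun x : Submodule F (M ⧸ L) => finrank F x = 1)
        (fun x => x ≤ H')
    have h1 : Nat.card {x : Submodule F (M ⧸ L) // finrank F x = 1} =
        ∑ i ∈ Finset.range 4, Fintype.card F ^ i := card_points'' hQdim
    have h2 : Nat.card {x : Submodule F (M ⧸ L) // finrank F x = 1 ∧ x ≤ H'} =
        ∑ i ∈ Finset.range 3, Fintype.card F ^ i := by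
      rw [card_restrict' H' (fun x => finrank F x = 1) (fun x => finrank F x = 1)
        (fun x => by rw [Submodule.finrank_map_subtype_eq])]
      exact card_points'' hH'dim
    rw [h1, h2] at split
    have h4 : ∑ i ∈ Finset.range 4, Fintype.card F ^ i =
        (∑ i ∈ Finset.range 3, Fintype.card F ^ i) + Fintype.card F ^ 3 :=
      Finset.sum_range_succ _ 3
    omega
  · intro x
    have hle : Submodule.comap L.mkQ x ≤ H ↔ x ≤ H' := by
      constructor
      · intro h
        have := Submodule.map_mono (f := L.mkQ) h
        rwa [Submodule.map_comap_eq_of_surjective (Submodule.mkQ_surjective L)] at this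
      · intro h
        have := Submodule.comap_mono (f := L.mkQ) h
        rwa [hcomapH] at this
    rw [finrank_comap_mkQ', hL, hle]
    constructor
    · rintro ⟨h1, h2⟩; exact ⟨by omega, h2⟩
    · rintro ⟨h1, h2⟩; exact ⟨by omega, h2⟩

lemma count_fiber2 (Q Pl H : Submodule F M) (hQPl : Q ≤ Pl) (hPlH : Pl ≤ H)
    (hQ : finrank F Q = 1) (hPl : finrank F Pl = 3) (hH : finrank F H = 5) :
    Nat.card {S : Submodule F M // (finrank F S = 3 ∧ S ⊓ Pl = Q) ∧ S ≤ H} =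
      Fintype.card F ^ 4 := by
  set Pl₁ := Submodule.comap H.subtype Pl with hPl₁def
  set Q₁ := Submodule.comap H.subtype Q with hQ₁def
  have hQH : Q ≤ H := hQPl.trans hPlH
  have hmapPl : Submodule.map H.subtype Pl₁ = Pl := by
    rw [hPl₁def, Submodule.map_comap_subtype, inf_eq_right.2 hPlH]
  have hmapQ : Submodule.map H.subtype Q₁ = Q := by
    rw [hQ₁def, Submodule.map_comap_subtype, inf_eq_right.2 hQH]
  have hPl₁ : finrank F Pl₁ = 3 := by
    rw [← hPl]; exact (Submodule.comapSubtypeEquivOfLe hPlH).finrank_eq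
  have hQ₁ : finrank F Q₁ = 1 := by
    rw [← hQ]; exact (Submodule.comapSubtypeEquivOfLe hQH).finrank_eq
  have hQ₁Pl₁ : Q₁ ≤ Pl₁ := Submodule.comap_mono hQPl
  have step1 := card_restrict' H (fun S => finrank F S = 3 ∧ S ⊓ Pl = Q)
      (fun S₁ => finrank F S₁ = 3 ∧ S₁ ⊓ Pl₁ = Q₁) ?_
  · rw [step1]
    have e1 : {S₁ : Submodule F H // finrank F S₁ = 3 ∧ S₁ ⊓ Pl₁ = Q₁} ≃
        {S₁ : Submodule F H // (finrank F S₁ = 3 ∧ S₁ ⊓ Pl₁ = Q₁) ∧ Q₁ ≤ S₁} :=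
      Equiv.subtypeEquivRight (fun S₁ => by
        constructor
        · rintro ⟨h1, h2⟩; exact ⟨⟨h1, h2⟩, h2 ▸ inf_le_left⟩
        · rintro ⟨h, _⟩; exact h)
    rw [Nat.card_congr e1]
    set y := Submodule.map Q₁.mkQ Pl₁ with hydef
    have hcomapy : Submodule.comap Q₁.mkQ y = Pl₁ := by
      rw [hydef, Submodule.comap_map_mkQ, sup_eq_right.2 hQ₁Pl₁]
    have hNdim : finrank F (H ⧸ Q₁) = 4 := by
      have := Submodule.finrank_quotient_add_finrank Q₁
      rw [hQ₁, hH] at this; omega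
    have hydim : finrank F y = 2 := by
      have := finrank_comap_mkQ' Q₁ y
      rw [hcomapy, hPl₁, hQ₁] at this; omega
    have hbot : (Q₁ : Submodule F H) = Submodule.comap Q₁.mkQ ⊥ := by
      rw [Submodule.comap_bot, Submodule.ker_mkQ]
    have hinj := Submodule.comap_injective_of_surjective (Submodule.mkQ_surjective Q₁)
    have step2 := card_quot' Q₁ (fun S₁ => finrank F S₁ = 3 ∧ S₁ ⊓ Pl₁ = Q₁)
        (fun x => IsCompl y x) ?_
    · rw [step2, card_isCompl']
      have hq2 : finrank F ((H ⧸ Q₁) ⧸ y) = 2 := by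
        have := Submodule.finrank_quotient_add_finrank y
        rw [hydim, hNdim] at this; omega
      rw [hq2, hydim]
    · intro x
      have hinf : Submodule.comap Q₁.mkQ x ⊓ Pl₁ = Submodule.comap Q₁.mkQ (x ⊓ y) := by
        rw [Submodule.comap_inf, hcomapy]
      rw [finrank_comap_mkQ', hQ₁, hinf]
      constructor
      · rintro ⟨h1, h2⟩
        have hxy : x ⊓ y = ⊥ := hinj (by rw [← hbot]; exact h2)
        have hdisj : Disjoint y x := by rw [disjoint_iff, inf_comm]; exact hxy
        have hcod : Codisjoint y x := by
          rw [codisjoint_iff]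
          apply Submodule.eq_top_of_finrank_eq
          have hs := Submodule.finrank_sup_add_finrank_inf_eq y x
          rw [inf_comm, hxy, finrank_bot] at hs
          rw [hNdim]
          omega
        exact ⟨hdisj, hcod⟩
      · intro h
        have hxy : x ⊓ y = ⊥ := by rw [inf_comm]; exact disjoint_iff.1 h.disjoint
        have hfr := Submodule.finrank_add_eq_of_isCompl h
        rw [hydim, hNdim] at hfr
        refine ⟨by omega, ?_⟩
        rw [hxy, ← hbot]
  · intro S₁
    rw [Submodule.finrank_map_subtype_eq]
    have hminf : Submodule.map H.subtype S₁ ⊓ Pl = Submodule.map H.subtype (S₁ ⊓ Pl₁) := by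
      rw [Submodule.map_inf_eq_map_inf_comap]
    have hminj := Submodule.map_injective_of_injective (Submodule.injective_subtype H)
    rw [hminf, ← hmapQ, hminj.eq_iff]

lemma count_indexL (P Pl : Submodule F M) (hPPl : P ≤ Pl) (hP : finrank F P = 1)
    (hPl : finrank F Pl = 3) :
    Nat.card {L : Submodule F M // (finrank F L = 2 ∧ P ≤ L) ∧ L ≤ Pl} =
      1 + Fintype.card F := by
  set P₀ := Submodule.comap Pl.subtype P with hP₀def
  have hmapP : Submodule.map Pl.subtype P₀ = P := by
    rw [hP₀def, Submodule.map_comap_subtype, inf_eq_right.2 hPPl]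
  have hP₀ : finrank F P₀ = 1 := by
    rw [← hP]; exact (Submodule.comapSubtypeEquivOfLe hPPl).finrank_eq
  have step1 := card_restrict' Pl (fun L => finrank F L = 2 ∧ P ≤ L)
      (fun L' => finrank F L' = 2 ∧ P₀ ≤ L') ?_
  · rw [step1]
    have step2 := card_quot' P₀ (fun L' => finrank F L' = 2) (fun x => finrank F x = 1) ?_
    · rw [step2]
      have hqdim : finrank F (Pl ⧸ P₀) = 2 := by
        have := Submodule.finrank_quotient_add_finrank P₀
        rw [hP₀, hPl] at this; omega
      rw [card_points'' hqdim]
      simp [Finset.sum_range_succ]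
    · intro x
      rw [finrank_comap_mkQ', hP₀]
      omega
  · intro L'
    rw [Submodule.finrank_map_subtype_eq]
    have hiff : P ≤ Submodule.map Pl.subtype L' ↔ P₀ ≤ L' := by
      constructor
      · intro h
        have := Submodule.comap_mono (f := Pl.subtype) h
        rwa [Submodule.comap_map_eq_of_injective (Submodule.injective_subtype Pl)] at this
      · intro h
        have := Submodule.map_mono (f := Pl.subtype) h
        rwa [hmapP] at this
    rw [hiff]

lemma count_indexQ (P Pl : Submodule F M) (hPPl : P ≤ Pl) (hP : finrank F P = 1)
    (hPl : finrank F Pl = 3) :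
    Nat.card {Q : Submodule F M // (finrank F Q = 1 ∧ Q ≠ P) ∧ Q ≤ Pl} =
      Fintype.card F + Fintype.card F ^ 2 := by
  set P₀ := Submodule.comap Pl.subtype P with hP₀def
  have hmapP : Submodule.map Pl.subtype P₀ = P := by
    rw [hP₀def, Submodule.map_comap_subtype, inf_eq_right.2 hPPl]
  have hP₀ : finrank F P₀ = 1 := by
    rw [← hP]; exact (Submodule.comapSubtypeEquivOfLe hPPl).finrank_eq
  have step1 := card_restrict' Pl (fun Q => finrank F Q = 1 ∧ Q ≠ P)
      (fun Q' => finrank F Q' = 1 ∧ ¬ (Q' = P₀)) ?_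
  · rw [step1]
    have split := natCard_split' (fun Q' : Submodule F Pl => finrank F Q' = 1)
        (fun Q' => Q' = P₀)
    have h1 : Nat.card {Q' : Submodule F Pl // finrank F Q' = 1} =
        ∑ i ∈ Finset.range 3, Fintype.card F ^ i := card_points'' hPl
    have h2 : Nat.card {Q' : Submodule F Pl // finrank F Q' = 1 ∧ Q' = P₀} = 1 := by
      haveI : Unique {Q' : Submodule F Pl // finrank F Q' = 1 ∧ Q' = P₀} :=
        { default := ⟨P₀, hP₀, rfl⟩
          uniq := fun a => Subtype.ext a.2.2 }
      exact Nat.card_unique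
    rw [h1, h2] at split
    have h3 : ∑ i ∈ Finset.range 3, Fintype.card F ^ i =
        1 + (Fintype.card F + Fintype.card F ^ 2) := by
      simp [Finset.sum_range_succ]
      ring
    omega
  · intro Q'
    rw [Submodule.finrank_map_subtype_eq]
    have hiff : Submodule.map Pl.subtype Q' = P ↔ Q' = P₀ := by
      constructor
      · intro h
        rw [hP₀def, ← h, Submodule.comap_map_eq_of_injective (Submodule.injective_subtype Pl)]
      · intro h
        rw [h, hmapP]
    simp only [ne_eq, hiff]

end counts

/-- In `V = F_q^6`, fix a point `P`, a plane `Π`, and a hyperplane `H` with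
`P ⊆ Π ⊆ H`. Let `Π₁` be the planes not contained in `H` meeting `Π` in a line through
`P`, and `Π₂` the planes contained in `H` meeting `Π` in exactly a point different from
`P`. Then `|Π₁ ∪ Π₂| = q³(q+1) + (q²+q)q⁴ = (q²+1)·q³(q+1)`. -/
theorem stmt_12 (F : Type) [Field F] [Fintype F] (q : ℕ) (hq : q = Fintype.card F)
    (P Pl H : Submodule F (Fin 6 → F))
    (hP : finrank F P = 1) (hPl : finrank F Pl = 3) (hH : finrank F H = 5)
    (hPPl : P ≤ Pl) (hPlH : Pl ≤ H) :
    Nat.card {S : Submodule F (Fin 6 → F) // finrank F S = 3 ∧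
        ((¬ S ≤ H ∧ finrank F (S ⊓ Pl : Submodule F (Fin 6 → F)) = 2 ∧ P ≤ S ⊓ Pl) ∨
         (S ≤ H ∧ finrank F (S ⊓ Pl : Submodule F (Fin 6 → F)) = 1 ∧ S ⊓ Pl ≠ P))}
      = q ^ 3 * (q + 1) + (q ^ 2 + q) * q ^ 4 ∧
    q ^ 3 * (q + 1) + (q ^ 2 + q) * q ^ 4 = (q ^ 2 + 1) * (q ^ 3 * (q + 1)) := by
  subst hq
  refine ⟨?_, by ring⟩
  have hM : finrank F (Fin 6 → F) = 6 := Module.finrank_fin_fun F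
  set pA : Submodule F (Fin 6 → F) → Prop := fun S =>
    finrank F S = 3 ∧ (¬ S ≤ H ∧ finrank F (S ⊓ Pl : Submodule F (Fin 6 → F)) = 2 ∧ P ≤ S ⊓ Pl)
    with hpA
  set pB : Submodule F (Fin 6 → F) → Prop := fun S =>
    finrank F S = 3 ∧ (S ≤ H ∧ finrank F (S ⊓ Pl : Submodule F (Fin 6 → F)) = 1 ∧ S ⊓ Pl ≠ P)
    with hpB
  have hsplit : Nat.card {S : Submodule F (Fin 6 → F) // finrank F S = 3 ∧
        ((¬ S ≤ H ∧ finrank F (S ⊓ Pl : Submodule F (Fin 6 → F)) = 2 ∧ P ≤ S ⊓ Pl) ∨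
         (S ≤ H ∧ finrank F (S ⊓ Pl : Submodule F (Fin 6 → F)) = 1 ∧ S ⊓ Pl ≠ P))}
      = Nat.card {S // pA S} + Nat.card {S // pB S} := by
    rw [Nat.card_congr (Equiv.subtypeEquivRight (q := fun S => pA S ∨ pB S)
      (fun S => by rw [hpA, hpB]; dsimp only; tauto))]
    exact natCard_or' pA pB (fun S hS => hS.1.2.1 hS.2.2.1)
  rw [hsplit]
  -- count of pA
  have hT1 : Nat.card {S // pA S} = (1 + Fintype.card F) * Fintype.card F ^ 3 := by
    let f1 : {S // pA S} →
        {L : Submodule F (Fin 6 → F) // (finrank F L = 2 ∧ P ≤ L) ∧ L ≤ Pl} :=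
      fun S => ⟨S.1 ⊓ Pl, ⟨S.2.2.2.1, S.2.2.2.2⟩, inf_le_right⟩
    have hfib : ∀ L, Nat.card {S : {S // pA S} // f1 S = L} = Fintype.card F ^ 3 := by
      intro L
      have hLPl : L.1 ≤ Pl := L.2.2
      have hLrank : finrank F L.1 = 2 := L.2.1.1
      have hPL : P ≤ L.1 := L.2.1.2
      have heq : ∀ S : Submodule F (Fin 6 → F),
          (pA S ∧ S ⊓ Pl = L.1) ↔ ((finrank F S = 3 ∧ ¬ S ≤ H) ∧ L.1 ≤ S) := by
        intro S
        constructor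
        · rintro ⟨⟨h3, hnH, _, _⟩, hSP⟩
          exact ⟨⟨h3, hnH⟩, hSP ▸ inf_le_left⟩
        · rintro ⟨⟨h3, hnH⟩, hLS⟩
          have hLinf : L.1 ≤ S ⊓ Pl := le_inf hLS hLPl
          have hge : 2 ≤ finrank F (S ⊓ Pl : Submodule F (Fin 6 → F)) := by
            rw [← hLrank]; exact Submodule.finrank_mono hLinf
          have hle3 : finrank F (S ⊓ Pl : Submodule F (Fin 6 → F)) ≤ 3 := by
            rw [← hPl]; exact Submodule.finrank_mono inf_le_right
          have h2 : finrank F (S ⊓ Pl : Submodule F (Fin 6 → F)) = 2 := by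
            by_contra hne
            have h3' : finrank F (S ⊓ Pl : Submodule F (Fin 6 → F)) = 3 := by omega
            have : S ⊓ Pl = Pl :=
              Submodule.eq_of_le_of_finrank_eq inf_le_right (by rw [h3', hPl])
            have hPlS : Pl ≤ S := this ▸ inf_le_left
            have : Pl = S := Submodule.eq_of_le_of_finrank_eq hPlS (by rw [hPl, h3])
            exact hnH (this ▸ hPlH)
          have hSPL : S ⊓ Pl = L.1 :=
            (Submodule.eq_of_le_of_finrank_eq hLinf (by rw [hLrank, h2])).symm
          exact ⟨⟨h3, hnH, h2, by rw [hSPL]; exact hPL⟩, hSPL⟩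
      have echain : {S : {S // pA S} // f1 S = L} ≃
          {S : Submodule F (Fin 6 → F) // (finrank F S = 3 ∧ ¬ S ≤ H) ∧ L.1 ≤ S} :=
        ((Equiv.subtypeEquivRight (fun S => Subtype.ext_iff)).trans
          (Equiv.subtypeSubtypeEquivSubtypeInter pA (fun S => S ⊓ Pl = L.1))).trans
          (Equiv.subtypeEquivRight heq)
      rw [Nat.card_congr echain]
      exact count_fiber1 L.1 H (hLPl.trans hPlH) hLrank hH hM
    rw [natCard_fibers' f1 (Fintype.card F ^ 3) hfib,
      count_indexL P Pl hPPl hP hPl]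
  -- count of pB
  have hT2 : Nat.card {S // pB S} =
      (Fintype.card F + Fintype.card F ^ 2) * Fintype.card F ^ 4 := by
    let f2 : {S // pB S} →
        {Q : Submodule F (Fin 6 → F) // (finrank F Q = 1 ∧ Q ≠ P) ∧ Q ≤ Pl} :=
      fun S => ⟨S.1 ⊓ Pl, ⟨S.2.2.2.1, S.2.2.2.2⟩, inf_le_right⟩
    have hfib : ∀ Q, Nat.card {S : {S // pB S} // f2 S = Q} = Fintype.card F ^ 4 := by
      intro Q
      have hQPl : Q.1 ≤ Pl := Q.2.2
      have hQrank : finrank F Q.1 = 1 := Q.2.1.1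
      have hQP : Q.1 ≠ P := Q.2.1.2
      have heq : ∀ S : Submodule F (Fin 6 → F),
          (pB S ∧ S ⊓ Pl = Q.1) ↔ ((finrank F S = 3 ∧ S ⊓ Pl = Q.1) ∧ S ≤ H) := by
        intro S
        constructor
        · rintro ⟨⟨h3, hSH, _, _⟩, hSP⟩
          exact ⟨⟨h3, hSP⟩, hSH⟩
        · rintro ⟨⟨h3, hSP⟩, hSH⟩
          exact ⟨⟨h3, hSH, hSP ▸ hQrank, hSP ▸ hQP⟩, hSP⟩
      have echain : {S : {S // pB S} // f2 S = Q} ≃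
          {S : Submodule F (Fin 6 → F) // (finrank F S = 3 ∧ S ⊓ Pl = Q.1) ∧ S ≤ H} :=
        ((Equiv.subtypeEquivRight (fun S => Subtype.ext_iff)).trans
          (Equiv.subtypeSubtypeEquivSubtypeInter pB (fun S => S ⊓ Pl = Q.1))).trans
          (Equiv.subtypeEquivRight heq)
      rw [Nat.card_congr echain]
      exact count_fiber2 Q.1 Pl H hQPl hPlH hQrank hPl hH
    rw [natCard_fibers' f2 (Fintype.card F ^ 4) hfib,
      count_indexQ P Pl hPPl hP hPl]
  rw [hT1, hT2]
  ring
end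

section
/- Let G ≤ PΓL(n,q) with d ≤ k ≤ n/2 (and d ≤ k). Then G has at least as many orbits on k-subspaces of F_q^n as on d-subspaces. If equality holds, the characteristic vector of each orbit of k-subspaces lies in the image of the transpose of the d-to-k incidence matrix, i.e., each orbit of k-subspaces is a degree d set. -/
open Module
open scoped Classical

open Module Submodule
set_option linter.unusedSectionVars false
namespace S16
variable {F : Type} [Field F] [Fintype F]

noncomputable def sc (F : Type) [Field F] (W : Type*) [AddCommGroup W] [Module F W] (r : ℕ) : ℕ :=
  Nat.card {S : Submodule F W // finrank F S = r}

noncomputable def Lc (F : Type) [Field F] (m : ℕ) : ℕ := sc F (Fin m → F) 1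

variable {W W' : Type*} [AddCommGroup W] [Module F W] [AddCommGroup W'] [Module F W']

lemma sc_congr (e : W ≃ₗ[F] W') (r : ℕ) : sc F W r = sc F W' r := by
  refine Nat.card_congr (Equiv.subtypeEquiv (Submodule.orderIsoMapComap e).toEquiv fun S => ?_)
  show finrank F S = r ↔ finrank F ((Submodule.orderIsoMapComap e) S) = r
  show finrank F S = r ↔ finrank F (S.map (e : W →ₗ[F] W')) = r
  rw [LinearEquiv.finrank_map_eq]

lemma sc_eq_of_finrank [FiniteDimensional F W] [FiniteDimensional F W']
    (h : finrank F W = finrank F W') (r : ℕ) : sc F W r = sc F W' r :=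
  sc_congr (LinearEquiv.ofFinrankEq _ _ h) r

lemma finrank_comap_mkQ [FiniteDimensional F W] (X : Submodule F W) (q : Submodule F (W ⧸ X)) :
    finrank F (q.comap X.mkQ) = finrank F q + finrank F X := by
  have h1 := LinearMap.finrank_range_add_finrank_ker (X.mkQ.comp (q.comap X.mkQ).subtype)
  have hr : LinearMap.range (X.mkQ.comp (q.comap X.mkQ).subtype) = q := by
    rw [LinearMap.range_comp, Submodule.range_subtype]
    exact Submodule.map_comap_eq_self (by rw [Submodule.range_mkQ]; exact le_top)
  have hk : LinearMap.ker (X.mkQ.comp (q.comap X.mkQ).subtype)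
      = X.comap (q.comap X.mkQ).subtype := by
    rw [LinearMap.ker_comp, Submodule.ker_mkQ]
  have hX : X ≤ q.comap X.mkQ := by
    intro x hx
    simp [Submodule.mem_comap, (Submodule.Quotient.mk_eq_zero X).2 hx]
  rw [hr, hk] at h1
  rw [← h1, (Submodule.comapSubtypeEquivOfLe hX).finrank_eq]

variable [FiniteDimensional F W]

/-- Subspaces above `X` with prescribed finrank correspond to subspaces of the quotient. -/
noncomputable def upperEquiv (X : Submodule F W) (s : ℕ) :
    {Y : Submodule F W // finrank F Y = finrank F X + s ∧ X ≤ Y}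
      ≃ {q : Submodule F (W ⧸ X) // finrank F q = s} where
  toFun Y := ⟨Y.1.map X.mkQ, by
    have h := finrank_comap_mkQ X (Y.1.map X.mkQ)
    rw [Submodule.comap_map_mkQ, sup_eq_right.mpr Y.2.2, Y.2.1] at h
    omega⟩
  invFun q := ⟨q.1.comap X.mkQ, by
    rw [finrank_comap_mkQ X q.1, q.2]; exact ⟨by ring, Submodule.le_comap_mkQ X q.1⟩⟩
  left_inv Y := Subtype.ext (show Submodule.comap X.mkQ (Submodule.map X.mkQ Y.1) = Y.1 by
    rw [Submodule.comap_map_mkQ, sup_eq_right.mpr Y.2.2])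
  right_inv q := Subtype.ext
    (Submodule.map_comap_eq_self (by rw [Submodule.range_mkQ]; exact le_top))

/-- Subspaces below `X` with prescribed finrank correspond to subspaces of `X`. -/
noncomputable def lowerEquiv (X : Submodule F W) (s : ℕ) :
    {Y : Submodule F W // finrank F Y = s ∧ Y ≤ X}
      ≃ {q : Submodule F X // finrank F q = s} where
  toFun Y := ⟨Y.1.comap X.subtype, by
    rw [(Submodule.comapSubtypeEquivOfLe Y.2.2).finrank_eq]; exact Y.2.1⟩
  invFun q := ⟨q.1.map X.subtype, by
    rw [Submodule.finrank_map_subtype_eq]; exact ⟨q.2, Submodule.map_subtype_le X q.1⟩⟩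
  left_inv Y := Subtype.ext (show Submodule.map X.subtype (Submodule.comap X.subtype Y.1) = Y.1 by
    rw [Submodule.map_comap_subtype, inf_of_le_right Y.2.2])
  right_inv q := Subtype.ext
    (Submodule.comap_map_eq_of_injective (Submodule.injective_subtype X) q.1)

lemma card_upper (X : Submodule F W) (s : ℕ) :
    Nat.card {Y : Submodule F W // finrank F Y = finrank F X + s ∧ X ≤ Y}
      = sc F (W ⧸ X) s :=
  Nat.card_congr (upperEquiv X s)

lemma card_lower (X : Submodule F W) (s : ℕ) :
    Nat.card {Y : Submodule F W // finrank F Y = s ∧ Y ≤ X} = sc F X s :=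
  Nat.card_congr (lowerEquiv X s)

/-- Interval equiv: subspaces between `D` and `K` correspond to subspaces of `K ⧸ D`-image. -/
noncomputable def betweenEquiv (D K : Submodule F W) (hDK : D ≤ K) (s : ℕ) :
    {E : Submodule F W // finrank F E = finrank F D + s ∧ D ≤ E ∧ E ≤ K}
      ≃ {q : Submodule F (W ⧸ D) // finrank F q = s ∧ q ≤ K.map D.mkQ} where
  toFun E := ⟨E.1.map D.mkQ, by
    have h := finrank_comap_mkQ D (E.1.map D.mkQ)
    rw [Submodule.comap_map_mkQ, sup_eq_right.mpr E.2.2.1, E.2.1] at h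
    exact ⟨by omega, Submodule.map_mono E.2.2.2⟩⟩
  invFun q := ⟨q.1.comap D.mkQ, by
    rw [finrank_comap_mkQ D q.1, q.2.1]
    refine ⟨by ring, Submodule.le_comap_mkQ D q.1, ?_⟩
    refine le_trans (Submodule.comap_mono q.2.2) ?_
    rw [Submodule.comap_map_mkQ, sup_eq_right.mpr hDK]⟩
  left_inv E := Subtype.ext (show Submodule.comap D.mkQ (Submodule.map D.mkQ E.1) = E.1 by
    rw [Submodule.comap_map_mkQ, sup_eq_right.mpr E.2.2.1])
  right_inv q := Subtype.ext
    (Submodule.map_comap_eq_self (by rw [Submodule.range_mkQ]; exact le_top))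

lemma card_between (D K : Submodule F W) (hDK : D ≤ K) {dd kk r : ℕ}
    (hD : finrank F D = dd) (hK : finrank F K = kk) (hr : dd ≤ r) :
    Nat.card {E : Submodule F W // finrank F E = r ∧ D ≤ E ∧ E ≤ K}
      = sc F (Fin (kk - dd) → F) (r - dd) := by
  have hmap : finrank F (K.map D.mkQ) = kk - dd := by
    have h := finrank_comap_mkQ D (K.map D.mkQ)
    rw [Submodule.comap_map_mkQ, sup_eq_right.mpr hDK, hK, hD] at h
    omega
  obtain ⟨s, rfl⟩ : ∃ s, r = dd + s := ⟨r - dd, by omega⟩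
  have h1 : Nat.card {E : Submodule F W // finrank F E = finrank F D + s ∧ D ≤ E ∧ E ≤ K}
      = Nat.card {q : Submodule F (W ⧸ D) // finrank F q = s ∧ q ≤ K.map D.mkQ} :=
    Nat.card_congr (betweenEquiv D K hDK s)
  rw [hD] at h1
  rw [show dd + s - dd = s by omega, h1, card_lower (K.map D.mkQ) s,
    sc_eq_of_finrank (W' := Fin (kk - dd) → F) (by rw [hmap, Module.finrank_fin_fun])]

/-- Duality: hyperplanes correspond to lines of the dual. -/
noncomputable def hypEquiv (hm : 1 ≤ finrank F W) :
    {S : Submodule F W // finrank F S = finrank F W - 1}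
      ≃ {Φ : Submodule F (Module.Dual F W) // finrank F Φ = 1} where
  toFun S := ⟨S.1.dualAnnihilator, by
    have h : finrank F (W ⧸ S.1) = finrank F S.1.dualAnnihilator :=
      (Subspace.quotEquivAnnihilator S.1).finrank_eq
    have h2 := Submodule.finrank_quotient_add_finrank S.1
    rw [S.2] at h2
    omega⟩
  invFun Φ := ⟨Φ.1.dualCoannihilator, by
    have h := Subspace.finrank_add_finrank_dualCoannihilator_eq Φ.1
    rw [Φ.2] at h
    omega⟩
  left_inv S := Subtype.ext Subspace.dualAnnihilator_dualCoannihilator_eq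
  right_inv Φ := Subtype.ext Subspace.dualCoannihilator_dualAnnihilator_eq

lemma hyp_eq_lines {m : ℕ} (hm : 1 ≤ m) (hW : finrank F W = m) :
    sc F W (m - 1) = Lc F m := by
  have h1 : sc F W (m - 1) = sc F (Module.Dual F W) 1 := by
    rw [sc, sc, ← hW]
    exact Nat.card_congr (hypEquiv (by omega))
  rw [h1, Lc]
  exact sc_eq_of_finrank (by rw [Subspace.dual_finrank_eq, hW, Module.finrank_fin_fun]) 1

lemma Lc_lt_Lc {a b : ℕ} (h : a < b) : Lc F a < Lc F b := by
  classical
  set φ : (Fin a → F) →ₗ[F] (Fin b → F) := Function.ExtendByZero.linearMap F (Fin.castLE h.le)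
  have hcast : Function.Injective (Fin.castLE h.le) := Fin.castLE_injective h.le
  have hφ : Function.Injective φ := by
    intro u v huv
    funext i
    have := congrFun huv (Fin.castLE h.le i)
    change Function.extend (Fin.castLE h.le) u 0 (Fin.castLE h.le i) = Function.extend (Fin.castLE h.le) v 0 (Fin.castLE h.le i) at this
    simpa [φ, Function.ExtendByZero.linearMap, hcast.extend_apply] using this
  have hφz : ∀ (u : Fin a → F), φ u ⟨a, h⟩ = 0 := by
    intro u
    have : ¬ ∃ i : Fin a, Fin.castLE h.le i = ⟨a, h⟩ := by
      rintro ⟨i, hi⟩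
      have : (i : ℕ) = a := congrArg Fin.val hi
      omega
    change Function.extend (Fin.castLE h.le) u 0 ⟨a, h⟩ = 0
    simp [φ, Function.ExtendByZero.linearMap, Function.extend_apply' _ _ _ this]
  set v : Fin b → F := Pi.single ⟨a, h⟩ 1 with hv
  have hvne : v ≠ 0 := by
    intro h0
    have := congrFun h0 ⟨a, h⟩
    simp [hv] at this
  set ψ : {S : Submodule F (Fin a → F) // finrank F S = 1}
      → {S : Submodule F (Fin b → F) // finrank F S = 1} :=
    fun S => ⟨S.1.map φ, by
      rw [← (Submodule.equivMapOfInjective φ hφ S.1).finrank_eq, S.2]⟩ with hψ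
  have hψinj : Function.Injective ψ := by
    intro S T hST
    exact Subtype.ext (Submodule.map_injective_of_injective hφ (congrArg Subtype.val hST))
  have hnotmem : (⟨Submodule.span F {v}, finrank_span_singleton hvne⟩ :
      {S : Submodule F (Fin b → F) // finrank F S = 1}) ∉ Set.range ψ := by
    rintro ⟨S, hS⟩
    have hvmem : v ∈ S.1.map φ := by
      rw [show S.1.map φ = Submodule.span F {v} from congrArg Subtype.val hS]
      exact Submodule.mem_span_singleton_self v
    obtain ⟨u, _, hu⟩ := hvmem
    have h0 := hφz u
    rw [hu] at h0
    simp [hv] at h0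
  calc Lc F a = Fintype.card {S : Submodule F (Fin a → F) // finrank F S = 1} :=
        Nat.card_eq_fintype_card
    _ < Fintype.card {S : Submodule F (Fin b → F) // finrank F S = 1} :=
        Fintype.card_lt_of_injective_of_notMem ψ hψinj hnotmem
    _ = Lc F b := Nat.card_eq_fintype_card.symm

open scoped Classical

/-- The subspaces of dimension `j` in `F^n`. -/
abbrev Om (F : Type) [Field F] [Fintype F] (n j : ℕ) : Type :=
  {S : Submodule F (Fin n → F) // finrank F S = j}

variable {n : ℕ}

/-- incidence sum: `(inc f) K = ∑_{D ≤ K} f D`. -/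
noncomputable def inc {a b : ℕ} (f : Om F n a → ℝ) (K : Om F n b) : ℝ :=
  ∑ D : Om F n a, if D.1 ≤ K.1 then f D else 0

omit [Fintype F] in
lemma expand_sq {α β : Type*} [Fintype α] [Fintype β] (g : α → ℝ) (R : α → β → Prop)
    [∀ Z Z', DecidablePred fun Y => R Z Y ∧ R Z' Y] :
    ∑ Y : β, (∑ Z : α, if R Z Y then g Z else 0)^2
      = ∑ Z : α, ∑ Z' : α, g Z * g Z'
          * ((Finset.univ.filter fun Y => R Z Y ∧ R Z' Y).card : ℝ) := by
  have h1 : ∀ Y : β, (∑ Z : α, if R Z Y then g Z else 0)^2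
      = ∑ Z : α, ∑ Z' : α, (if R Z Y then g Z else 0) * (if R Z' Y then g Z' else 0) := by
    intro Y; rw [sq, Finset.sum_mul_sum]
  simp_rw [h1]
  rw [Finset.sum_comm]
  refine Finset.sum_congr rfl fun Z _ => ?_
  rw [Finset.sum_comm]
  refine Finset.sum_congr rfl fun Z' _ => ?_
  have h2 : ∀ Y : β, (if R Z Y then g Z else 0) * (if R Z' Y then g Z' else 0)
      = g Z * g Z' * (if R Z Y ∧ R Z' Y then (1:ℝ) else 0) := by
    intro Y
    by_cases hA : R Z Y <;> by_cases hB : R Z' Y <;> simp [hA, hB]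
  simp_rw [h2, ← Finset.mul_sum]
  congr 1
  rw [Finset.sum_boole]

lemma card_filter_eq_natCard {α : Type*} [Fintype α] (p : α → Prop) [DecidablePred p] :
    (Finset.univ.filter p).card = Nat.card {x : α // p x} := by
  rw [Nat.card_eq_fintype_card, Fintype.card_subtype]

lemma natCard_om_flatten {b : ℕ} (p : Submodule F (Fin n → F) → Prop) :
    Nat.card {Y : Om F n b // p Y.1} = Nat.card {Y : Submodule F (Fin n → F) // finrank F Y = b ∧ p Y} :=
  Nat.card_congr (Equiv.subtypeSubtypeEquivSubtypeInter _ _)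

lemma finrank_total : finrank F (Fin n → F) = n := Module.finrank_fin_fun F

/-- Single-step injectivity of the up-incidence map. -/
lemma step_inj {j : ℕ} (hj : 2 * (j + 1) ≤ n) (g : Om F n j → ℝ)
    (hg : ∀ Y : Om F n (j + 1), inc g Y = 0) : ∀ Z, g Z = 0 := by
  rcases Nat.eq_zero_or_pos j with rfl | hjpos
  · -- j = 0 : only subspace is ⊥
    have hZb : ∀ Z : Om F n 0, Z.1 = ⊥ := fun Z => Submodule.finrank_eq_zero.mp Z.2
    have hn : 2 ≤ n := by omega
    set v : Fin n → F := Pi.single (⟨0, by omega⟩ : Fin n) (1 : F) with hv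
    have hvne : v ≠ 0 := by
      intro h0
      have := congrFun h0 ⟨0, by omega⟩
      simp [hv] at this
    set Y : Om F n 1 := ⟨Submodule.span F {v}, finrank_span_singleton hvne⟩
    intro Z
    have h := hg Y
    rw [inc] at h
    have huniv : (Finset.univ : Finset (Om F n 0)) = {Z} := by
      refine Finset.eq_singleton_iff_unique_mem.mpr ⟨Finset.mem_univ _, fun x _ => ?_⟩
      exact Subtype.ext (by rw [hZb x, hZb Z])
    rw [huniv, Finset.sum_singleton, hZb Z] at h
    simpa using h
  · obtain ⟨j', rfl⟩ : ∃ j', j = j' + 1 := ⟨j - 1, by omega⟩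
    set A : ℕ := Lc F (n - (j' + 1)) with hA
    set B : ℕ := Lc F (j' + 1) with hB
    have hBA : B < A := Lc_lt_Lc (by omega)
    -- diagonal up count
    have hup : ∀ Z : Om F n (j' + 1),
        ((Finset.univ.filter fun Y : Om F n (j' + 2) => Z.1 ≤ Y.1 ∧ Z.1 ≤ Y.1).card : ℕ) = A := by
      intro Z
      rw [card_filter_eq_natCard]
      simp only [and_self]
      rw [natCard_om_flatten (fun Y => Z.1 ≤ Y)]
      have h1 : Nat.card {Y : Submodule F (Fin n → F) // finrank F Y = finrank F Z.1 + 1 ∧ Z.1 ≤ Y}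
          = sc F ((Fin n → F) ⧸ Z.1) 1 := card_upper Z.1 1
      rw [Z.2] at h1
      rw [show j' + 2 = j' + 1 + 1 from rfl, h1, hA, Lc]
      refine sc_eq_of_finrank ?_ 1
      have h2 := Submodule.finrank_quotient_add_finrank Z.1
      rw [Z.2, finrank_total] at h2
      rw [Module.finrank_fin_fun]
      omega
    -- diagonal down count
    have hdn : ∀ Z : Om F n (j' + 1),
        ((Finset.univ.filter fun Wl : Om F n j' => Wl.1 ≤ Z.1 ∧ Wl.1 ≤ Z.1).card : ℕ) = B := by
      intro Z
      rw [card_filter_eq_natCard]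
      simp only [and_self]
      rw [natCard_om_flatten (fun Wl => Wl ≤ Z.1), card_lower Z.1 j']
      have h1 : sc F Z.1 j' = sc F (Fin (j' + 1) → F) j' :=
        sc_eq_of_finrank (by rw [Z.2, Module.finrank_fin_fun]) j'
      rw [h1, hB]
      have := hyp_eq_lines (F := F) (W := Fin (j' + 1) → F) (m := j' + 1) (by omega)
        (Module.finrank_fin_fun F)
      simpa using this
    -- off-diagonal equality
    have hoff : ∀ Z Z' : Om F n (j' + 1), Z ≠ Z' →
        (Finset.univ.filter fun Y : Om F n (j' + 2) => Z.1 ≤ Y.1 ∧ Z'.1 ≤ Y.1).card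
          = (Finset.univ.filter fun Wl : Om F n j' => Wl.1 ≤ Z.1 ∧ Wl.1 ≤ Z'.1).card := by
      intro Z Z' hne
      have hZ1 : Z.1 ≠ Z'.1 := fun h => hne (Subtype.ext h)
      have hsi := Submodule.finrank_sup_add_finrank_inf_eq Z.1 Z'.1
      rw [Z.2, Z'.2] at hsi
      have hinf_lt : finrank F ↥(Z.1 ⊓ Z'.1) < j' + 1 := by
        rcases lt_or_eq_of_le (le_trans (Submodule.finrank_mono inf_le_left) (le_of_eq Z.2)) with h | h
        · exact h
        · exfalso
          have h1 : Z.1 ⊓ Z'.1 = Z.1 :=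
            Submodule.eq_of_le_of_finrank_le inf_le_left (by rw [Z.2, h])
          have h2 : Z.1 ≤ Z'.1 := by rw [← h1]; exact inf_le_right
          exact hZ1 (Submodule.eq_of_le_of_finrank_le h2 (by rw [Z.2, Z'.2]))
      have hsup_gt : j' + 1 < finrank F ↥(Z.1 ⊔ Z'.1) := by omega
      by_cases hcase : finrank F ↥(Z.1 ⊔ Z'.1) = j' + 2
      · have hinf : finrank F ↥(Z.1 ⊓ Z'.1) = j' := by omega
        have h1 : (Finset.univ.filter fun Y : Om F n (j' + 2) => Z.1 ≤ Y.1 ∧ Z'.1 ≤ Y.1)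
            = {⟨Z.1 ⊔ Z'.1, hcase⟩} := by
          refine Finset.eq_singleton_iff_unique_mem.mpr ⟨?_, ?_⟩
          · simp [Finset.mem_filter, le_sup_left, le_sup_right]
          · intro Y hY
            rw [Finset.mem_filter] at hY
            refine Subtype.ext ?_
            exact (Submodule.eq_of_le_of_finrank_le (sup_le hY.2.1 hY.2.2)
              (by rw [Y.2, hcase])).symm
        have h2 : (Finset.univ.filter fun Wl : Om F n j' => Wl.1 ≤ Z.1 ∧ Wl.1 ≤ Z'.1)
            = {⟨Z.1 ⊓ Z'.1, hinf⟩} := by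
          refine Finset.eq_singleton_iff_unique_mem.mpr ⟨?_, ?_⟩
          · simp [Finset.mem_filter, inf_le_left, inf_le_right]
          · intro Wl hWl
            rw [Finset.mem_filter] at hWl
            refine Subtype.ext ?_
            exact Submodule.eq_of_le_of_finrank_le (le_inf hWl.2.1 hWl.2.2)
              (by rw [Wl.2, hinf])
        rw [h1, h2, Finset.card_singleton, Finset.card_singleton]
      · have hsup3 : j' + 3 ≤ finrank F ↥(Z.1 ⊔ Z'.1) := by omega
        have hinf2 : finrank F ↥(Z.1 ⊓ Z'.1) < j' := by omega
        have h1 : (Finset.univ.filter fun Y : Om F n (j' + 2) => Z.1 ≤ Y.1 ∧ Z'.1 ≤ Y.1)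
            = ∅ := by
          refine Finset.filter_eq_empty_iff.mpr fun {Y} _ => ?_
          rintro ⟨hZY, hZ'Y⟩
          have hm : finrank F ↥(Z.1 ⊔ Z'.1) ≤ finrank F ↥(Y.1) :=
            Submodule.finrank_mono (sup_le hZY hZ'Y)
          rw [Y.2] at hm
          omega
        have h2 : (Finset.univ.filter fun Wl : Om F n j' => Wl.1 ≤ Z.1 ∧ Wl.1 ≤ Z'.1)
            = ∅ := by
          refine Finset.filter_eq_empty_iff.mpr fun {Wl} _ => ?_
          rintro ⟨hWZ, hWZ'⟩
          have hm : finrank F ↥(Wl.1) ≤ finrank F ↥(Z.1 ⊓ Z'.1) :=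
            Submodule.finrank_mono (le_inf hWZ hWZ')
          rw [Wl.2] at hm
          omega
        rw [h1, h2]
        rfl
    -- the quadratic argument
    have hq1 : ∑ Z : Om F n (j' + 1), ∑ Z' : Om F n (j' + 1), g Z * g Z'
        * ((Finset.univ.filter fun Y : Om F n (j' + 2) => Z.1 ≤ Y.1 ∧ Z'.1 ≤ Y.1).card : ℝ)
        = 0 := by
      rw [← expand_sq (β := Om F n (j' + 2)) g (fun Z Y => Z.1 ≤ Y.1)]
      refine Finset.sum_eq_zero fun Y _ => ?_
      have := hg Y
      rw [inc] at this
      rw [this]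
      simp
    have hq2 : (0:ℝ) ≤ ∑ Z : Om F n (j' + 1), ∑ Z' : Om F n (j' + 1), g Z * g Z'
        * ((Finset.univ.filter fun Wl : Om F n j' => Wl.1 ≤ Z.1 ∧ Wl.1 ≤ Z'.1).card : ℝ) := by
      rw [← expand_sq (β := Om F n j') g (fun Z Wl => Wl.1 ≤ Z.1)]
      exact Finset.sum_nonneg fun _ _ => sq_nonneg _
    have hdiff : ∑ Z : Om F n (j' + 1), ∑ Z' : Om F n (j' + 1),
        (g Z * g Z' * ((Finset.univ.filter fun Y : Om F n (j' + 2) => Z.1 ≤ Y.1 ∧ Z'.1 ≤ Y.1).card : ℝ)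
         - g Z * g Z' * ((Finset.univ.filter fun Wl : Om F n j' => Wl.1 ≤ Z.1 ∧ Wl.1 ≤ Z'.1).card : ℝ))
        = ∑ Z : Om F n (j' + 1), (g Z)^2 * ((A : ℝ) - (B : ℝ)) := by
      refine Finset.sum_congr rfl fun Z _ => ?_
      rw [Finset.sum_eq_single Z]
      · rw [hup Z, hdn Z, sq]; ring
      · intro Z' _ hne
        rw [hoff Z Z' (fun h => hne h.symm)]
        ring
      · intro h
        exact absurd (Finset.mem_univ Z) h
    simp only [Finset.sum_sub_distrib] at hdiff
    rw [hq1, zero_sub] at hdiff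
    have hT : ∑ Z : Om F n (j' + 1), (g Z)^2 * ((A : ℝ) - (B : ℝ)) ≤ 0 := by
      rw [← hdiff]; linarith [hq2]
    have hABpos : (0:ℝ) < (A : ℝ) - (B : ℝ) := by
      have : (B : ℝ) < (A : ℝ) := by exact_mod_cast hBA
      linarith
    have hTsum : ∑ Z : Om F n (j' + 1), (g Z)^2 ≤ 0 := by
      rw [← Finset.sum_mul] at hT
      by_contra hpos
      push_neg at hpos
      nlinarith [hT]
    have hzero : ∑ Z : Om F n (j' + 1), (g Z)^2 = 0 :=
      le_antisymm hTsum (Finset.sum_nonneg fun _ _ => sq_nonneg _)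
    intro Z
    have hz := (Finset.sum_eq_zero_iff_of_nonneg
      (fun x _ => sq_nonneg (g x))).mp hzero Z (Finset.mem_univ Z)
    exact pow_eq_zero_iff (two_ne_zero) |>.mp hz

/-- Composition identity: summing the `d → k` incidence over `k`-subspaces of a fixed
`(k+1)`-subspace is a constant multiple of the `d → (k+1)` incidence. -/
lemma comp_identity {d k : ℕ} (hdk : d ≤ k) (f : Om F n d → ℝ) (Y : Om F n (k + 1)) :
    ∑ E : Om F n k, (if E.1 ≤ Y.1 then inc f E else 0)
      = (sc F (Fin (k + 1 - d) → F) (k - d) : ℝ) * inc f Y := by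
  have h1 : ∀ E : Om F n k, (if E.1 ≤ Y.1 then inc f E else 0)
      = ∑ D : Om F n d, (if D.1 ≤ E.1 ∧ E.1 ≤ Y.1 then f D else 0) := by
    intro E
    by_cases hE : E.1 ≤ Y.1
    · rw [if_pos hE, inc]
      refine Finset.sum_congr rfl fun D _ => ?_
      by_cases hD : D.1 ≤ E.1 <;> simp [hD, hE]
    · rw [if_neg hE]
      refine (Finset.sum_eq_zero fun D _ => ?_).symm
      simp [hE]
  simp_rw [h1]
  rw [Finset.sum_comm]
  have h2 : ∀ D : Om F n d, ∑ E : Om F n k, (if D.1 ≤ E.1 ∧ E.1 ≤ Y.1 then f D else 0)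
      = ((Finset.univ.filter fun E : Om F n k => D.1 ≤ E.1 ∧ E.1 ≤ Y.1).card : ℝ) * f D := by
    intro D
    rw [← Finset.sum_filter, Finset.sum_const, nsmul_eq_mul]
  have h3 : ∀ D : Om F n d,
      ((Finset.univ.filter fun E : Om F n k => D.1 ≤ E.1 ∧ E.1 ≤ Y.1).card : ℝ)
        = (sc F (Fin (k + 1 - d) → F) (k - d) : ℝ) * (if D.1 ≤ Y.1 then 1 else 0) := by
    intro D
    by_cases hDY : D.1 ≤ Y.1
    · rw [if_pos hDY, mul_one]
      norm_cast
      rw [card_filter_eq_natCard, natCard_om_flatten (fun E => D.1 ≤ E ∧ E ≤ Y.1)]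
      exact card_between D.1 Y.1 hDY D.2 Y.2 hdk
    · rw [if_neg hDY, mul_zero]
      norm_cast
      rw [Finset.filter_eq_empty_iff.mpr fun {E} _ => ?_, Finset.card_empty]
      rintro ⟨hDE, hEY⟩
      exact hDY (le_trans hDE hEY)
  simp_rw [h2, h3]
  rw [inc, Finset.mul_sum]
  refine Finset.sum_congr rfl fun D _ => ?_
  by_cases hDY : D.1 ≤ Y.1
  · simp [hDY]
  · simp [hDY]

/-- Full injectivity of the transpose incidence map (Kantor's theorem). -/
lemma inc_inj {d k : ℕ} (hdk : d ≤ k) (hkn : 2 * k ≤ n) (f : Om F n d → ℝ)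
    (hf : ∀ K : Om F n k, inc f K = 0) : ∀ D, f D = 0 := by
  induction k, hdk using Nat.le_induction with
  | base =>
    intro D
    have h := hf D
    rw [inc, Finset.sum_eq_single D] at h
    · simpa using h
    · intro E _ hne
      rw [if_neg]
      intro hle
      exact hne (Subtype.ext (Submodule.eq_of_le_of_finrank_le hle (by rw [E.2, D.2])))
    · intro h
      exact absurd (Finset.mem_univ D) h
  | succ k hk ih =>
    have hstep : ∀ Y : Om F n (k + 1), inc (fun E : Om F n k => inc f E) Y = 0 := by
      intro Y
      rw [inc, comp_identity hk f Y, hf Y, mul_zero]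
    have hmid : ∀ E : Om F n k, inc f E = 0 := step_inj hkn (fun E => inc f E) hstep
    exact ih (by omega) hmid

end S16

/-- Let `G` be a group of collineations of `PG(n-1,q)` (a subgroup of `PΓL(n,q)`),
viewed via its action on the subspaces of `F_q^n`, which preserves dimension and
inclusion. If `d ≤ k ≤ n/2`, then `G` has at least as many orbits on `k`-subspaces as on
`d`-subspaces; and in case of equality the characteristic vector of every orbit of
`k`-subspaces lies in the image of the transpose of the `d`-to-`k` incidence matrix,
i.e. every orbit of `k`-subspaces is a degree `d` set. -/
theorem stmt_16 (F : Type) [Field F] [Fintype F] (n d k : ℕ)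
    (hdk : d ≤ k) (hkn : 2 * k ≤ n)
    (G : Type) [Group G] [MulAction G (Submodule F (Fin n → F))]
    (hrank : ∀ (g : G) (S : Submodule F (Fin n → F)), finrank F (g • S : Submodule F (Fin n → F)) = finrank F S)
    (hle : ∀ (g : G) (S T : Submodule F (Fin n → F)), S ≤ T → g • S ≤ g • T) :
    Nat.card (Set.range fun S : {S : Submodule F (Fin n → F) // finrank F S = d} =>
        MulAction.orbit G (S : Submodule F (Fin n → F)))
      ≤ Nat.card (Set.range fun S : {S : Submodule F (Fin n → F) // finrank F S = k} =>
        MulAction.orbit G (S : Submodule F (Fin n → F))) ∧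
    (Nat.card (Set.range fun S : {S : Submodule F (Fin n → F) // finrank F S = d} =>
        MulAction.orbit G (S : Submodule F (Fin n → F)))
      = Nat.card (Set.range fun S : {S : Submodule F (Fin n → F) // finrank F S = k} =>
        MulAction.orbit G (S : Submodule F (Fin n → F))) →
      ∀ S₀ : Submodule F (Fin n → F), finrank F S₀ = k →
        ∃ c : Submodule F (Fin n → F) → ℝ, ∀ S : Submodule F (Fin n → F), finrank F S = k →
          (if S ∈ MulAction.orbit G S₀ then (1 : ℝ) else 0)
            = ∑ T : Submodule F (Fin n → F),
                c T * (if finrank F T = d ∧ T ≤ S then (1 : ℝ) else 0)) := by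
  classical
  set Qd : Set (Set (Submodule F (Fin n → F))) :=
    Set.range fun S : {S : Submodule F (Fin n → F) // finrank F S = d} =>
      MulAction.orbit G (S : Submodule F (Fin n → F)) with hQd
  set Qk : Set (Set (Submodule F (Fin n → F))) :=
    Set.range fun S : {S : Submodule F (Fin n → F) // finrank F S = k} =>
      MulAction.orbit G (S : Submodule F (Fin n → F)) with hQk
  haveI : Fintype ↥Qd := Fintype.ofFinite _
  haveI : Fintype ↥Qk := Fintype.ofFinite _
  -- orbit maps
  set od : S16.Om F n d → ↥Qd := fun S => ⟨MulAction.orbit G S.1, ⟨S, rfl⟩⟩ with hod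
  set ok : S16.Om F n k → ↥Qk := fun S => ⟨MulAction.orbit G S.1, ⟨S, rfl⟩⟩ with hok
  have hodsurj : Function.Surjective od := by
    rintro ⟨q, S, hS⟩
    exact ⟨S, Subtype.ext hS⟩
  have hoksurj : Function.Surjective ok := by
    rintro ⟨q, S, hS⟩
    exact ⟨S, Subtype.ext hS⟩
  have hle2 : ∀ (g : G) (S T : Submodule F (Fin n → F)), S ≤ T ↔ g • S ≤ g • T := by
    intro g S T
    refine ⟨hle g S T, fun h => ?_⟩
    have h2 := hle g⁻¹ _ _ h
    simpa [inv_smul_smul] using h2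
  -- the image vectors of the orbit indicators
  set u : ↥Qd → (S16.Om F n k → ℝ) :=
    fun q => S16.inc (fun D => if od D = q then (1:ℝ) else 0) with hu
  set e : ↥Qk → (S16.Om F n k → ℝ) := fun p K => if ok K = p then (1:ℝ) else 0 with he
  -- combination formula
  have hcombo : ∀ (c : ↥Qd → ℝ) (K : S16.Om F n k),
      (∑ q : ↥Qd, c q • u q) K = S16.inc (fun D => c (od D)) K := by
    intro c K
    rw [Finset.sum_apply]
    simp only [Pi.smul_apply, smul_eq_mul, hu, S16.inc, Finset.mul_sum]
    rw [Finset.sum_comm]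
    refine Finset.sum_congr rfl fun D _ => ?_
    by_cases hDK : D.1 ≤ K.1
    · simp only [if_pos hDK]
      rw [Finset.sum_eq_single (od D)]
      · simp
      · intro q _ hq
        rw [if_neg (fun h => hq h.symm), mul_zero]
      · intro h
        exact absurd (Finset.mem_univ _) h
    · simp [if_neg hDK]
  -- linear independence of the images
  have hu_li : LinearIndependent ℝ u := by
    rw [Fintype.linearIndependent_iff]
    intro a ha q
    have key : ∀ K : S16.Om F n k, S16.inc (fun D => a (od D)) K = 0 := by
      intro K
      rw [← hcombo a K, ha]
      rfl
    obtain ⟨D, rfl⟩ := hodsurj q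
    exact S16.inc_inj hdk hkn _ key D
  -- u q is constant on k-orbits
  have hconst : ∀ (q : ↥Qd) (K K' : S16.Om F n k), ok K = ok K' → u q K = u q K' := by
    intro q K K' h
    have h1 : MulAction.orbit G K.1 = MulAction.orbit G K'.1 := congrArg Subtype.val h
    obtain ⟨g, hg⟩ := MulAction.orbit_eq_iff.mp h1.symm
    -- hg : g • K.1 = K'.1
    let σ : S16.Om F n d ≃ S16.Om F n d :=
      { toFun := fun D => ⟨g • D.1, by rw [hrank]; exact D.2⟩
        invFun := fun D => ⟨g⁻¹ • D.1, by rw [hrank]; exact D.2⟩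
        left_inv := fun D => Subtype.ext (inv_smul_smul g D.1)
        right_inv := fun D => Subtype.ext (smul_inv_smul g D.1) }
    rw [hu]
    show S16.inc _ K = S16.inc _ K'
    rw [S16.inc, S16.inc]
    refine Fintype.sum_equiv σ _ _ fun D => ?_
    have hle3 : D.1 ≤ K.1 ↔ (σ D).1 ≤ K'.1 := by
      rw [← hg]
      exact hle2 g D.1 K.1
    have horb : od (σ D) = od D := by
      refine Subtype.ext ?_
      show MulAction.orbit G (g • D.1) = MulAction.orbit G D.1
      exact MulAction.orbit_smul g D.1
    by_cases hD : D.1 ≤ K.1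
    · rw [if_pos hD, if_pos (hle3.mp hD), horb]
    · rw [if_neg hD, if_neg (fun h => hD (hle3.mpr h))]
  -- each u q lies in the span of the k-orbit indicators
  have hspan : ∀ q : ↥Qd, u q ∈ Submodule.span ℝ (Set.range e) := by
    intro q
    have hrep : ∀ p : ↥Qk, ok (hoksurj p).choose = p := fun p => (hoksurj p).choose_spec
    refine (mem_span_range_iff_exists_fun ℝ).mpr ⟨fun p => u q (hoksurj p).choose, ?_⟩
    funext K
    rw [Finset.sum_apply]
    simp only [Pi.smul_apply, he, smul_eq_mul]
    rw [Finset.sum_eq_single (ok K)]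
    · rw [if_pos rfl, mul_one]
      exact hconst q _ K (hrep (ok K))
    · intro p _ hp
      rw [if_neg (fun h => hp h.symm), mul_zero]
    · intro h
      exact absurd (Finset.mem_univ _) h
  -- the inequality
  have h1 : finrank ℝ (Submodule.span ℝ (Set.range u)) = Fintype.card ↥Qd :=
    finrank_span_eq_card hu_li
  have h2 : Submodule.span ℝ (Set.range u) ≤ Submodule.span ℝ (Set.range e) := by
    rw [Submodule.span_le]
    rintro _ ⟨q, rfl⟩
    exact hspan q
  have h3 : finrank ℝ (Submodule.span ℝ (Set.range e)) ≤ Fintype.card ↥Qk := by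
    have := finrank_range_le_card (R := ℝ) e
    rwa [Set.finrank] at this
  have hineq : Nat.card ↥Qd ≤ Nat.card ↥Qk := by
    rw [Nat.card_eq_fintype_card, Nat.card_eq_fintype_card, ← h1]
    exact le_trans (Submodule.finrank_mono h2) h3
  refine ⟨hineq, ?_⟩
  intro hEq S₀ hS₀
  -- equality case: the spans coincide
  have hspans : Submodule.span ℝ (Set.range u) = Submodule.span ℝ (Set.range e) := by
    refine Submodule.eq_of_le_of_finrank_le h2 ?_
    rw [h1]
    refine le_trans h3 ?_
    rw [← Nat.card_eq_fintype_card, ← Nat.card_eq_fintype_card, ← hEq]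
  set p₀ : ↥Qk := ok ⟨S₀, hS₀⟩ with hp₀
  have hmem : e p₀ ∈ Submodule.span ℝ (Set.range u) := by
    rw [hspans]
    exact Submodule.subset_span ⟨p₀, rfl⟩
  obtain ⟨c, hc⟩ := (mem_span_range_iff_exists_fun ℝ).mp hmem
  refine ⟨fun T => if h : finrank F T = d then c (od ⟨T, h⟩) else 0, ?_⟩
  intro S hS
  have hrhs : ∑ T : Submodule F (Fin n → F),
      (if h : finrank F T = d then c (od ⟨T, h⟩) else 0)
        * (if finrank F T = d ∧ T ≤ S then (1:ℝ) else 0)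
      = S16.inc (fun D => c (od D)) ⟨S, hS⟩ := by
    rw [S16.inc]
    rw [← Finset.sum_filter_of_ne (p := fun T : Submodule F (Fin n → F) => finrank F T = d)
      (fun T _ hne => by
        by_contra hTd
        apply hne
        rw [if_neg (fun hand => hTd hand.1), mul_zero])]
    rw [Finset.sum_subtype (p := fun T : Submodule F (Fin n → F) => finrank F T = d)
      (Finset.univ.filter fun T : Submodule F (Fin n → F) => finrank F T = d)
      (by intro T; simp) (fun T => (if h : finrank F T = d then c (od ⟨T, h⟩) else 0)
        * (if finrank F T = d ∧ T ≤ S then (1:ℝ) else 0))]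
    refine Finset.sum_congr rfl fun D _ => ?_
    rw [dif_pos D.2]
    by_cases hDS : D.1 ≤ S
    · rw [if_pos ⟨D.2, hDS⟩, if_pos hDS, mul_one]
    · rw [if_neg (fun h => hDS h.2), if_neg hDS, mul_zero]
  rw [hrhs, ← hcombo c ⟨S, hS⟩, hc]
  show (if S ∈ MulAction.orbit G S₀ then (1:ℝ) else 0) = if ok ⟨S, hS⟩ = p₀ then (1:ℝ) else 0
  have hiff : ok ⟨S, hS⟩ = p₀ ↔ S ∈ MulAction.orbit G S₀ := by
    rw [hp₀, hok]
    constructor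
    · intro h
      have := congrArg Subtype.val h
      exact MulAction.orbit_eq_iff.mp this
    · intro h
      exact Subtype.ext (MulAction.orbit_eq_iff.mpr h)
  by_cases hmem2 : S ∈ MulAction.orbit G S₀
  · rw [if_pos hmem2, if_pos (hiff.mpr hmem2)]
  · rw [if_neg hmem2, if_neg (fun h => hmem2 (hiff.mp h))]
end
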